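/- arXiv:1501.00165 — 12 statements merged into one kernel-verified Lean document; each statement's English description precedes it below -/
import Mathlib

section
/- Let G be a graph with a closed labeling by [n]. If vertices i ≠ j satisfy N[i] = N[j] (equal closed/full neighborhoods), then the labeling obtained by transposing the labels i and j is also closed. -/
def IsClosedLabeling {n : ℕ} (G : SimpleGraph (Fin n)) : Prop :=
  ∀ u v w : Fin n, G.Adj v u → G.Adj v w → u ≠ w →
    ((v < u ∧ v < w) ∨ (u < v ∧ w < v)) → G.Adj u w

/-- The full (closed) neighborhood of a vertex. -/
def fullNbhd {V : Type*} (G : SimpleGraph V) (v : V) : Set V :=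
  {v} ∪ G.neighborSet v

theorem swap_labeling_closed {n : ℕ} (G : SimpleGraph (Fin n))
    (hG : IsClosedLabeling G) (i j : Fin n) (hij : i ≠ j)
    (hexch : fullNbhd G i = fullNbhd G j) :
    IsClosedLabeling (G.comap (Equiv.swap i j)) := by
  have hmem : ∀ x, (x = i ∨ G.Adj i x) ↔ (x = j ∨ G.Adj j x) := by
    intro x
    have := Set.ext_iff.mp hexch x
    simpa [fullNbhd, SimpleGraph.mem_neighborSet, eq_comm] using this
  have hadj : G.Adj i j := by
    rcases (hmem j).mpr (Or.inl rfl) with h | h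
    · exact absurd h.symm hij
    · exact h
  have hsame : ∀ x, x ≠ i → x ≠ j → (G.Adj i x ↔ G.Adj j x) := by
    intro x hxi hxj
    constructor
    · intro h; rcases (hmem x).mp (Or.inr h) with h' | h'
      · exact absurd h' hxj
      · exact h'
    · intro h; rcases (hmem x).mpr (Or.inr h) with h' | h'
      · exact absurd h' hxi
      · exact h'
  have key : ∀ a b : Fin n, G.Adj (Equiv.swap i j a) (Equiv.swap i j b) ↔ G.Adj a b := by
    have aux : ∀ a b : Fin n, G.Adj a b → G.Adj (Equiv.swap i j a) (Equiv.swap i j b) := by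
      intro a b hab
      rcases eq_or_ne a i with hai | hai <;> rcases eq_or_ne b i with hbi | hbi
      · exact absurd (hai.trans hbi.symm) hab.ne
      · rcases eq_or_ne b j with hbj | hbj
        · subst hai; subst hbj
          rw [Equiv.swap_apply_left, Equiv.swap_apply_right]
          exact hadj.symm
        · subst hai
          rw [Equiv.swap_apply_left, Equiv.swap_apply_of_ne_of_ne hbi hbj]
          exact (hsame b hbi hbj).mp hab
      · rcases eq_or_ne a j with haj | haj
        · subst haj; subst hbi
          rw [Equiv.swap_apply_left, Equiv.swap_apply_right]
          exact hadj
        · subst hbi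
          rw [Equiv.swap_apply_of_ne_of_ne hai haj, Equiv.swap_apply_left]
          exact ((hsame a hai haj).mp hab.symm).symm
      · rcases eq_or_ne a j with haj | haj
        · rcases eq_or_ne b j with hbj | hbj
          · exact absurd (haj.trans hbj.symm) hab.ne
          · subst haj
            rw [Equiv.swap_apply_right, Equiv.swap_apply_of_ne_of_ne hbi hbj]
            exact (hsame b hbi hbj).mpr hab
        · rcases eq_or_ne b j with hbj | hbj
          · subst hbj
            rw [Equiv.swap_apply_of_ne_of_ne hai haj, Equiv.swap_apply_right]
            exact ((hsame a hai haj).mpr hab.symm).symm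
          · rwa [Equiv.swap_apply_of_ne_of_ne hai haj,
              Equiv.swap_apply_of_ne_of_ne hbi hbj]
    intro a b
    constructor
    · intro h
      have := aux _ _ h
      simpa using this
    · exact aux a b
  intro u v w h1 h2 hne hord
  simp only [SimpleGraph.comap_adj] at h1 h2 ⊢
  exact (key u w).mpr (hG u v w ((key v u).mp h1) ((key v w).mp h2) hne hord)
end

section
/- Let G be a connected graph with a closed labeling by [n]. For every i ∈ [n], the exchangeability equivalence class e(i) = {j : N[j] = N[i]} is an interval of integers. -/
lemma nbr_step {n : ℕ} {G : SimpleGraph (Fin n)} (hG : IsClosedLabeling G) :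
    ∀ k : ℕ, ∀ a b : Fin n, ∀ w : G.Walk a b, w.length ≤ k →
      ((a < b → ∃ c, G.Adj a c ∧ a < c ∧ c ≤ b ∧ ∃ u : G.Walk c b, u.length < w.length) ∧
       (b < a → ∃ c, G.Adj a c ∧ b ≤ c ∧ c < a ∧ ∃ u : G.Walk c b, u.length < w.length)) := by
  intro k
  induction k using Nat.strong_induction_on with
  | _ k IH =>
    intro a b w hw
    cases w with
    | nil =>
      exact ⟨fun h => absurd h (lt_irrefl a), fun h => absurd h (lt_irrefl a)⟩
    | @cons _ p _ h w' =>
      have hw' : w'.length < k := by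
        simp only [SimpleGraph.Walk.length_cons] at hw; omega
      constructor
      · intro hab
        rcases lt_trichotomy p a with hpa | rfl | hap
        · -- p < a
          have hpb : p < b := hpa.trans hab
          obtain ⟨c, hc, hpc, hcb, u, hu⟩ := ((IH w'.length hw' p b w' le_rfl).1) hpb
          rcases lt_trichotomy c a with hca | rfl | hac
          · have hadj : G.Adj a c := hG a p c h.symm hc hca.ne' (Or.inl ⟨hpa, hpc⟩)
            obtain ⟨c', hc', h1, h2, u', hu'⟩ :=
              ((IH (u.length + 1) (by omega) a b (SimpleGraph.Walk.cons hadj u) le_rfl).1) hab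
            refine ⟨c', hc', h1, h2, u', ?_⟩
            simp only [SimpleGraph.Walk.length_cons] at hu' ⊢; omega
          · obtain ⟨c', hc', h1, h2, u', hu'⟩ := ((IH u.length (by omega) c b u le_rfl).1) hab
            refine ⟨c', hc', h1, h2, u', ?_⟩
            simp only [SimpleGraph.Walk.length_cons]; omega
          · refine ⟨c, hG a p c h.symm hc hac.ne (Or.inl ⟨hpa, hpc⟩), hac, hcb, u, ?_⟩
            simp only [SimpleGraph.Walk.length_cons]; omega
        · exact absurd h (G.irrefl)
        · rcases le_or_gt p b with hpb | hbp
          · refine ⟨p, h, hap, hpb, w', ?_⟩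
            simp only [SimpleGraph.Walk.length_cons]; omega
          · obtain ⟨c, hc, hbc, hcp, u, hu⟩ := ((IH w'.length hw' p b w' le_rfl).2) hbp
            have hac : a < c := lt_of_lt_of_le hab hbc
            have hadj : G.Adj a c := hG a p c h.symm hc hac.ne (Or.inr ⟨hap, hcp⟩)
            rcases eq_or_lt_of_le hbc with rfl | hbc'
            · refine ⟨b, hadj, hac, le_refl _, u, ?_⟩
              simp only [SimpleGraph.Walk.length_cons]; omega
            · obtain ⟨c', hc', h1, h2, u', hu'⟩ :=
                ((IH (u.length + 1) (by omega) a b (SimpleGraph.Walk.cons hadj u) le_rfl).1) hab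
              refine ⟨c', hc', h1, h2, u', ?_⟩
              simp only [SimpleGraph.Walk.length_cons] at hu' ⊢; omega
      · intro hba
        rcases lt_trichotomy a p with hap | rfl | hpa
        · -- a < p
          have hbp : b < p := hba.trans hap
          obtain ⟨c, hc, hbc, hcp, u, hu⟩ := ((IH w'.length hw' p b w' le_rfl).2) hbp
          rcases lt_trichotomy a c with hac | rfl | hca
          · have hadj : G.Adj a c := hG a p c h.symm hc hac.ne (Or.inr ⟨hap, hcp⟩)
            obtain ⟨c', hc', h1, h2, u', hu'⟩ :=
              ((IH (u.length + 1) (by omega) a b (SimpleGraph.Walk.cons hadj u) le_rfl).2) hba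
            refine ⟨c', hc', h1, h2, u', ?_⟩
            simp only [SimpleGraph.Walk.length_cons] at hu' ⊢; omega
          · obtain ⟨c', hc', h1, h2, u', hu'⟩ := ((IH u.length (by omega) a b u le_rfl).2) hba
            refine ⟨c', hc', h1, h2, u', ?_⟩
            simp only [SimpleGraph.Walk.length_cons]; omega
          · refine ⟨c, hG a p c h.symm hc hca.ne' (Or.inr ⟨hap, hcp⟩), hbc, hca, u, ?_⟩
            simp only [SimpleGraph.Walk.length_cons]; omega
        · exact absurd h (G.irrefl)
        · rcases le_or_gt b p with hbp | hpb
          · refine ⟨p, h, hbp, hpa, w', ?_⟩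
            simp only [SimpleGraph.Walk.length_cons]; omega
          · obtain ⟨c, hc, hpc, hcb, u, hu⟩ := ((IH w'.length hw' p b w' le_rfl).1) hpb
            have hca : c < a := lt_of_le_of_lt hcb hba
            have hadj : G.Adj a c := hG a p c h.symm hc hca.ne' (Or.inl ⟨hpa, hpc⟩)
            rcases eq_or_lt_of_le hcb with rfl | hcb'
            · refine ⟨c, hadj, le_refl _, hca, u, ?_⟩
              simp only [SimpleGraph.Walk.length_cons]; omega
            · obtain ⟨c', hc', h1, h2, u', hu'⟩ :=
                ((IH (u.length + 1) (by omega) a b (SimpleGraph.Walk.cons hadj u) le_rfl).2) hba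
              refine ⟨c', hc', h1, h2, u', ?_⟩
              simp only [SimpleGraph.Walk.length_cons] at hu' ⊢; omega

lemma adj_consec {n : ℕ} {G : SimpleGraph (Fin n)} (hconn : G.Connected)
    (hG : IsClosedLabeling G) {a b : Fin n} (hab : (a : ℕ) + 1 = (b : ℕ)) : G.Adj a b := by
  obtain ⟨w⟩ := hconn.preconnected a b
  have hlt : a < b := by rw [Fin.lt_def]; omega
  obtain ⟨c, hac, h1, h2, -⟩ := (nbr_step hG w.length a b w le_rfl).1 hlt
  have hcb : c = b := by
    rw [Fin.lt_def] at h1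
    rw [Fin.le_def] at h2
    exact Fin.ext (by omega)
  rwa [hcb] at hac

lemma adj_up {n : ℕ} {G : SimpleGraph (Fin n)} (hconn : G.Connected)
    (hG : IsClosedLabeling G) : ∀ d : ℕ, ∀ x y z : Fin n, (y : ℕ) - (x : ℕ) = d →
    G.Adj x z → x < y → y < z → G.Adj y z := by
  intro d
  induction d using Nat.strong_induction_on with
  | _ d IH =>
    intro x y z hd hxz hxy hyz
    have hxy' := Fin.lt_def.mp hxy
    have hyz' := Fin.lt_def.mp hyz
    by_cases h1 : (y : ℕ) = (x : ℕ) + 1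
    · have hxyadj : G.Adj x y := adj_consec hconn hG h1.symm
      exact hG y x z hxyadj hxz (Fin.ne_of_lt hyz) (Or.inl ⟨hxy, hxy.trans hyz⟩)
    · have hy0 : 0 < (y : ℕ) := by omega
      have hyn : (y : ℕ) - 1 < n := by omega
      set y' : Fin n := ⟨(y : ℕ) - 1, hyn⟩ with hy'
      have hyval : (y' : ℕ) = (y : ℕ) - 1 := rfl
      have hxy'lt : x < y' := by rw [Fin.lt_def, hyval]; omega
      have hy'y : (y' : ℕ) + 1 = (y : ℕ) := by rw [hyval]; omega
      have hy'z : y' < z := by rw [Fin.lt_def, hyval]; omega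
      have hadj1 : G.Adj y' z :=
        IH ((y' : ℕ) - (x : ℕ)) (by rw [hyval]; omega) x y' z rfl hxz hxy'lt hy'z
      have hadj2 : G.Adj y' y := adj_consec hconn hG hy'y
      exact hG y y' z hadj2 hadj1 (Fin.ne_of_lt hyz)
        (Or.inl ⟨by rw [Fin.lt_def, hyval]; omega, hy'z⟩)

lemma adj_down {n : ℕ} {G : SimpleGraph (Fin n)} (hconn : G.Connected)
    (hG : IsClosedLabeling G) {x y z : Fin n} (hxz : G.Adj x z) (hxy : x < y)
    (hyz : y < z) : G.Adj x y := by
  have h1 : G.Adj y z := adj_up hconn hG _ x y z rfl hxz hxy hyz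
  exact hG x z y hxz.symm h1.symm (Fin.ne_of_lt hxy) (Or.inr ⟨hxy.trans hyz, hyz⟩)

lemma convexClass {n : ℕ} {G : SimpleGraph (Fin n)} (hconn : G.Connected)
    (hG : IsClosedLabeling G) {a b c : Fin n} (hab : fullNbhd G a = fullNbhd G b)
    (hac : a ≤ c) (hcb : c ≤ b) : fullNbhd G c = fullNbhd G a := by
  rcases eq_or_lt_of_le hac with rfl | hac'
  · rfl
  rcases eq_or_lt_of_le hcb with rfl | hcb'
  · exact hab.symm
  have hab' : a < b := hac'.trans hcb'
  have key : ∀ x : Fin n, (x = a ∨ G.Adj a x) ↔ (x = b ∨ G.Adj b x) := by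
    intro x
    have := Set.ext_iff.mp hab x
    simpa [fullNbhd, SimpleGraph.mem_neighborSet] using this
  have hAB : G.Adj a b := by
    have hb : (b = a ∨ G.Adj a b) := (key b).mpr (Or.inl rfl)
    rcases hb with hb | hb
    · exact absurd hb (Fin.ne_of_lt hab').symm
    · exact hb
  have hACadj : G.Adj a c := adj_down hconn hG hAB hac' hcb'
  have hCBadj : G.Adj c b := adj_up hconn hG _ a c b rfl hAB hac' hcb'
  have main : ∀ x : Fin n, (x = c ∨ G.Adj c x) ↔ (x = a ∨ G.Adj a x) := by
    intro x
    constructor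
    · rintro (rfl | hcx)
      · exact Or.inr hACadj
      · rcases lt_trichotomy x c with hxc | rfl | hcxlt
        · by_cases hxa : x = a
          · exact Or.inl hxa
          · exact Or.inr (hG x c a hcx hACadj.symm hxa (Or.inr ⟨hxc, hac'⟩)).symm
        · exact absurd hcx G.irrefl
        · by_cases hxb : x = b
          · exact (key x).mpr (Or.inl hxb)
          · have : G.Adj x b := hG x c b hcx hCBadj hxb (Or.inl ⟨hcxlt, hcb'⟩)
            exact (key x).mpr (Or.inr this.symm)
    · intro hx
      have hxb : x = b ∨ G.Adj b x := (key x).mp hx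
      rcases hx with rfl | hax
      · exact Or.inr hACadj.symm
      · by_cases hxc : x = c
        · exact Or.inl hxc
        rcases hxb with rfl | hbx
        · exact Or.inr hCBadj
        rcases lt_trichotomy x c with hlt | heq | hgt
        · exact Or.inr (hG x b c hbx hCBadj.symm hxc
            (Or.inr ⟨hlt.trans hcb', hcb'⟩)).symm
        · exact absurd heq hxc
        · exact Or.inr (hG x a c hax hACadj hxc (Or.inl ⟨hac'.trans hgt, hac'⟩)).symm
  ext x
  simpa [fullNbhd, SimpleGraph.mem_neighborSet] using main x

theorem exchClass_interval {n : ℕ} (G : SimpleGraph (Fin n))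
    (hconn : G.Connected) (hG : IsClosedLabeling G) (i : Fin n) :
    ∃ a b : Fin n, {j : Fin n | fullNbhd G j = fullNbhd G i} = Set.Icc a b := by
  classical
  set S : Finset (Fin n) := Finset.univ.filter (fun j => fullNbhd G j = fullNbhd G i) with hS
  have hiS : i ∈ S := by simp [hS]
  have hne : S.Nonempty := ⟨i, hiS⟩
  refine ⟨S.min' hne, S.max' hne, ?_⟩
  have haS : fullNbhd G (S.min' hne) = fullNbhd G i := by
    have := S.min'_mem hne; simpa [hS] using this
  have hbS : fullNbhd G (S.max' hne) = fullNbhd G i := by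
    have := S.max'_mem hne; simpa [hS] using this
  ext j
  simp only [Set.mem_setOf_eq, Set.mem_Icc]
  constructor
  · intro hj
    have hjS : j ∈ S := by simp [hS, hj]
    exact ⟨S.min'_le j hjS, S.le_max' j hjS⟩
  · rintro ⟨h1, h2⟩
    have := convexClass hconn hG (hab := haS.trans hbS.symm) h1 h2
    rw [this, haS]
end

section
/- If G is a connected graph with a closed labeling and i < j are exchangeable (N[i] = N[j]) and i < k < j, then N[k] = N[i]. -/
lemma exists_adj_dist {n : ℕ} {G : SimpleGraph (Fin n)} {x y : Fin n} {s : ℕ}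
    (hr : G.Reachable x y) (hconn : G.Connected) (h : G.dist x y = s + 1) :
    ∃ a : Fin n, G.Adj a y ∧ G.dist x a = s := by
  obtain ⟨p, hp⟩ := hr.exists_walk_length_eq_dist
  have hlen : p.reverse.length = s + 1 := by simp [hp, h]
  cases hpr : p.reverse with
  | nil => rw [hpr] at hlen; simp at hlen
  | cons ha q =>
    rw [hpr] at hlen
    simp [SimpleGraph.Walk.length_cons] at hlen
    rename_i a
    refine ⟨a, ha.symm, ?_⟩
    have h1 : G.dist x a ≤ s := by
      have := G.dist_le q.reverse
      simpa [hlen] using this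
    have h2 : s ≤ G.dist x a := by
      have ht := hconn.dist_triangle (u := x) (v := a) (w := y)
      have : G.dist a y ≤ 1 := by
        rw [SimpleGraph.dist_eq_one_iff_adj.mpr ha.symm]
      omega
    omega

lemma mono_step {n : ℕ} {G : SimpleGraph (Fin n)} (hconn : G.Connected)
    (hG : IsClosedLabeling G) :
    ∀ s : ℕ, ∀ x y : Fin n, G.dist x y = s → x < y →
      (∃ a, G.Adj a y ∧ x ≤ a ∧ a < y ∧ G.dist x a + 1 = s) ∧
      (∃ c, G.Adj x c ∧ x < c ∧ c ≤ y ∧ G.dist c y + 1 = s) := by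
  intro s
  induction s using Nat.strong_induction_on with
  | _ s ih =>
    intro x y hd hxy
    have hr : G.Reachable x y := hconn.preconnected x y
    rcases s with _ | t
    · exact absurd (hr.dist_eq_zero_iff.mp hd) (ne_of_lt hxy)
    constructor
    · obtain ⟨a, hay, hda⟩ := exists_adj_dist hr hconn hd
      rcases lt_trichotomy a x with h | h | h
      · exfalso
        have hax : G.dist a x = t := by rw [SimpleGraph.dist_comm]; exact hda
        obtain ⟨c, hac, h1, h2, h3⟩ := (ih t (Nat.lt_succ_self t) a x hax h).2
        have hcy_ne : c ≠ y := by
          intro hcy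
          rw [hcy, SimpleGraph.dist_comm] at h3
          omega
        have hnadj : ¬ G.Adj c y := by
          intro hcy
          have ht := hconn.dist_triangle (u := x) (v := c) (w := y)
          have h4 : G.dist x c + 1 = t := by rw [SimpleGraph.dist_comm]; exact h3
          have h5 : G.dist c y = 1 := SimpleGraph.dist_eq_one_iff_adj.mpr hcy
          omega
        exact hnadj ((hG y a c hay hac hcy_ne.symm
          (Or.inl ⟨lt_trans h hxy, h1⟩)).symm)
      · refine ⟨a, hay, le_of_eq h.symm, h ▸ hxy, by omega⟩
      · obtain ⟨b, hba, hxb, hblta, hdb⟩ := (ih t (Nat.lt_succ_self t) x a hda h).1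
        have hay_lt : a < y := by
          rcases lt_trichotomy a y with h' | h' | h'
          · exact h'
          · exfalso; rw [h'] at hda; omega
          · exfalso
            have hby_ne : b ≠ y := by intro hby; rw [hby] at hdb; omega
            have hnadj : ¬ G.Adj b y := by
              intro hby
              have ht := hconn.dist_triangle (u := x) (v := b) (w := y)
              have h5 : G.dist b y = 1 := SimpleGraph.dist_eq_one_iff_adj.mpr hby
              omega
            exact hnadj (hG b a y hba.symm hay hby_ne (Or.inr ⟨hblta, h'⟩))
        exact ⟨a, hay, le_of_lt h, hay_lt, by omega⟩
    · have hd' : G.dist y x = t + 1 := by rw [SimpleGraph.dist_comm]; exact hd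
      obtain ⟨c, hcx, hdc⟩ := exists_adj_dist hr.symm hconn hd'
      have hcy : G.dist c y = t := by rw [SimpleGraph.dist_comm]; exact hdc
      have hxc : G.Adj x c := hcx.symm
      rcases lt_trichotomy c y with h | h | h
      · obtain ⟨e, hce, h1, h2, h3⟩ := (ih t (Nat.lt_succ_self t) c y hcy h).2
        have hxe_ne : x ≠ e := by intro hxe; rw [← hxe] at h3; omega
        have hnadj : ¬ G.Adj x e := by
          intro hxe
          have ht := hconn.dist_triangle (u := x) (v := e) (w := y)
          have h5 : G.dist x e = 1 := SimpleGraph.dist_eq_one_iff_adj.mpr hxe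
          omega
        have hxltc : x < c := by
          rcases lt_trichotomy x c with h' | h' | h'
          · exact h'
          · exact absurd (h' ▸ hxc) (G.irrefl)
          · exact absurd (hG x c e hcx hce hxe_ne (Or.inl ⟨h', h1⟩)) hnadj
        exact ⟨c, hxc, hxltc, le_of_lt h, by omega⟩
      · exact ⟨c, hxc, h ▸ hxy, le_of_eq h, by omega⟩
      · exfalso
        obtain ⟨b, hbc, h1, h2, h3⟩ := (ih t (Nat.lt_succ_self t) y c hdc h).1
        have hxb_ne : x ≠ b := by
          intro hxb; rw [← hxb, SimpleGraph.dist_comm] at h3; omega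
        have hnadj : ¬ G.Adj x b := by
          intro hxb
          have ht := hconn.dist_triangle (u := x) (v := b) (w := y)
          have h4 : G.dist x b = 1 := SimpleGraph.dist_eq_one_iff_adj.mpr hxb
          have h5 : G.dist b y = G.dist y b := SimpleGraph.dist_comm ..
          omega
        exact hnadj (hG x c b hcx hbc.symm hxb_ne (Or.inr ⟨lt_trans hxy h, h2⟩))

theorem fullNbhd_eq_of_between {n : ℕ} (G : SimpleGraph (Fin n))
    (hconn : G.Connected) (hG : IsClosedLabeling G) (i j k : Fin n)
    (hij : i < j) (hexch : fullNbhd G i = fullNbhd G j)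
    (hik : i < k) (hkj : k < j) :
    fullNbhd G k = fullNbhd G i := by
  have hmem : ∀ v m : Fin n, m ∈ fullNbhd G v ↔ m = v ∨ G.Adj v m := by
    intro v m
    simp [fullNbhd, SimpleGraph.mem_neighborSet, Set.mem_union, Set.mem_singleton_iff]
  have hiff : ∀ m, (m = i ∨ G.Adj i m) ↔ (m = j ∨ G.Adj j m) := by
    intro m; rw [← hmem, ← hmem, hexch]
  have hij_adj : G.Adj i j :=
    ((hiff j).mpr (Or.inl rfl)).resolve_left (ne_of_gt hij)
  have hNj : ∀ m, G.Adj i m → m ≠ j → G.Adj j m := fun m h hne =>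
    ((hiff m).mp (Or.inr h)).resolve_left hne
  have hNi : ∀ m, G.Adj j m → m ≠ i → G.Adj i m := fun m h hne =>
    ((hiff m).mpr (Or.inr h)).resolve_left hne
  have key : ∀ s : ℕ, ∀ k' : Fin n, G.dist i k' = s → i < k' → k' < j → G.Adj i k' := by
    intro s
    induction s using Nat.strong_induction_on with
    | _ s ih =>
      intro k' hd hik' hkj'
      rcases s with _ | t
      · exact absurd ((hconn.preconnected i k').dist_eq_zero_iff.mp hd) (ne_of_lt hik')
      obtain ⟨a, hak, hia_le, halt, hda⟩ := (mono_step hconn hG (t + 1) i k' hd hik').1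
      rcases eq_or_lt_of_le hia_le with h | h
      · exact h ▸ hak
      · have hia_adj : G.Adj i a :=
          ih t (Nat.lt_succ_self t) a (by omega) h (lt_trans halt hkj')
        have haj : G.Adj a j := (hNj a hia_adj (ne_of_lt (lt_trans halt hkj'))).symm
        have hkj_adj : G.Adj k' j :=
          hG k' a j hak haj (ne_of_lt hkj') (Or.inl ⟨halt, lt_trans halt hkj'⟩)
        exact hNi k' hkj_adj.symm (ne_of_gt hik')
  have hik_adj : G.Adj i k := key (G.dist i k) k rfl hik hkj
  have hkj_adj : G.Adj k j := (hNj k hik_adj (ne_of_lt hkj)).symm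
  ext x
  rw [hmem, hmem]
  constructor
  · rintro (rfl | hkx)
    · exact Or.inr hik_adj
    · by_cases hxi : x = i
      · exact Or.inl hxi
      rcases lt_trichotomy x k with h | h | h
      · exact Or.inr (hG x k i hkx hik_adj.symm hxi (Or.inr ⟨h, hik⟩)).symm
      · exact absurd (h ▸ hkx) G.irrefl
      · by_cases hxj : x = j
        · exact Or.inr (hxj ▸ hij_adj)
        · have hxjadj : G.Adj x j := hG x k j hkx hkj_adj hxj (Or.inl ⟨h, hkj⟩)
          exact Or.inr (hNi x hxjadj.symm hxi)
  · rintro (rfl | hix)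
    · exact Or.inr hik_adj.symm
    · by_cases hxk : x = k
      · exact Or.inl hxk
      by_cases hxj : x = j
      · exact Or.inr (hxj ▸ hkj_adj)
      have hxjadj : G.Adj j x := (hNj x hix hxj)
      rcases lt_trichotomy x k with h | h | h
      · exact Or.inr (hG x j k hxjadj hkj_adj.symm hxk (Or.inr ⟨lt_trans h hkj, hkj⟩)).symm
      · exact absurd h hxk
      · exact Or.inr (hG x i k hix hik_adj hxk (Or.inl ⟨lt_trans hik h, hik⟩)).symm
end

section
/- Let G be a connected graph with a closed labeling by [n], and let L_N denote the set of vertices at distance N from vertex 1. Then each layer L_N induces a complete subgraph of G. -/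
/-- The `N`-th layer: vertices at distance `N` from the first vertex. -/
def layer {n : ℕ} (G : SimpleGraph (Fin (n + 1))) (N : ℕ) : Set (Fin (n + 1)) :=
  {i | G.dist 0 i = N}

/-- Any vertex at positive distance from `0` has a neighbor one step closer. -/
lemma exists_nbr_closer {n N : ℕ} (G : SimpleGraph (Fin (n + 1))) (hconn : G.Connected)
    (j : Fin (n + 1)) (hj : G.dist 0 j = N + 1) :
    ∃ j', G.Adj j' j ∧ G.dist 0 j' = N := by
  obtain ⟨p, hp⟩ := (hconn 0 j).exists_walk_length_eq_dist
  have hplen : p.length = N + 1 := by rw [hp, hj]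
  have hrlen : p.reverse.length = N + 1 := by
    rw [SimpleGraph.Walk.length_reverse, hplen]
  cases hpr : p.reverse with
  | nil => rw [hpr] at hrlen; simp at hrlen
  | @cons _ x _ h q =>
    rw [hpr] at hrlen
    simp only [SimpleGraph.Walk.length_cons, Nat.add_right_cancel_iff] at hrlen
    refine ⟨x, h.symm, ?_⟩
    have h1 : G.dist 0 x ≤ N := by
      have := SimpleGraph.dist_le q.reverse
      rwa [SimpleGraph.Walk.length_reverse, hrlen] at this
    have h2 : G.dist 0 j ≤ G.dist 0 x + G.dist x j := hconn.dist_triangle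
    have h3 : G.dist x j ≤ 1 := by
      have := SimpleGraph.dist_le h.symm.toWalk
      simpa using this
    omega

lemma layer_key {n : ℕ} (G : SimpleGraph (Fin (n + 1)))
    (hconn : G.Connected) (hG : IsClosedLabeling G) (N : ℕ) :
    (∀ i j : Fin (n + 1), G.dist 0 i = N → G.dist 0 j = N → i ≠ j → G.Adj i j) ∧
    (∀ i j : Fin (n + 1), G.dist 0 i = N → G.dist 0 j = N + 1 → i < j) := by
  induction N with
  | zero =>
    constructor
    · intro i j hi hj hij
      have h1 : (0 : Fin (n+1)) = i := hconn.dist_eq_zero_iff.mp hi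
      have h2 : (0 : Fin (n+1)) = j := hconn.dist_eq_zero_iff.mp hj
      exact absurd (h1.symm.trans h2) hij
    · intro i j hi hj
      have hi0 : (0 : Fin (n+1)) = i := hconn.dist_eq_zero_iff.mp hi
      have hj0 : j ≠ 0 := by
        intro h; rw [h, SimpleGraph.dist_self] at hj; omega
      rw [← hi0]
      exact Fin.pos_of_ne_zero hj0
  | succ N ih =>
    obtain ⟨ihC, ihM⟩ := ih
    -- adjacency bound: if Adj a b then dist 0 b ≤ dist 0 a + 1
    have hadj_dist : ∀ a b : Fin (n + 1), G.Adj a b → G.dist 0 b ≤ G.dist 0 a + 1 := by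
      intro a b hab
      have h2 : G.dist 0 b ≤ G.dist 0 a + G.dist a b := hconn.dist_triangle
      have h3 : G.dist a b ≤ 1 := by
        have := SimpleGraph.dist_le hab.toWalk; simpa using this
      omega
    have hClique : ∀ i j : Fin (n + 1), G.dist 0 i = N + 1 → G.dist 0 j = N + 1 →
        i ≠ j → G.Adj i j := by
      intro i j hi hj hij
      obtain ⟨i', hi'adj, hi'⟩ := exists_nbr_closer G hconn i hi
      obtain ⟨j', hj'adj, hj'⟩ := exists_nbr_closer G hconn j hj
      have hi'lt : i' < i := ihM i' i hi' hi
      have hj'lt : j' < j := ihM j' j hj' hj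
      have hi'ltj : i' < j := ihM i' j hi' hj
      have hj'lti : j' < i := ihM j' i hj' hi
      by_cases heq : i' = j'
      · subst heq
        exact hG i i' j hi'adj hj'adj hij (Or.inl ⟨hi'lt, hi'ltj⟩)
      · have hadj : G.Adj i' j' := ihC i' j' hi' hj' heq
        rcases lt_or_gt_of_ne heq with hlt | hgt
        · -- i' < j' : get Adj j' i, then Adj i j
          have hji' : j' ≠ i := by intro h; rw [h] at hj'; omega
          have h1 : G.Adj j' i := hG j' i' i hadj hi'adj hji' (Or.inl ⟨hlt, hi'lt⟩)
          exact hG i j' j h1 hj'adj hij (Or.inl ⟨hj'lti, hj'lt⟩)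
        · -- j' < i' : get Adj i' j, then Adj j i
          have hij' : i' ≠ j := by intro h; rw [h] at hi'; omega
          have h1 : G.Adj i' j := hG i' j' j hadj.symm hj'adj hij' (Or.inl ⟨hgt, hj'lt⟩)
          exact (hG j i' i h1 hi'adj (fun h => hij h.symm) (Or.inl ⟨hi'ltj, hi'lt⟩)).symm
    refine ⟨hClique, ?_⟩
    intro i j hi hj
    by_contra hnot
    have hji : j < i := by
      rcases lt_trichotomy i j with h | h | h
      · exact absurd h hnot
      · exfalso; rw [h] at hi; omega
      · exact h
    obtain ⟨i'', hi''adj, hi''⟩ := exists_nbr_closer G hconn i hi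
    obtain ⟨j', hj'adj, hj'⟩ := exists_nbr_closer G hconn j hj
    have hi''lt : i'' < i := ihM i'' i hi'' hi
    have hji'' : j ≠ i'' := by intro h; rw [h] at hj; omega
    -- first show G.Adj i j leads to contradiction
    have key : ¬ G.Adj i j := by
      intro hadjij
      have : G.Adj j i'' := hG j i i'' hadjij hi''adj.symm hji'' (Or.inr ⟨hji, hi''lt⟩)
      have := hadj_dist i'' j this.symm
      omega
    by_cases hj'i : j' = i
    · exact key (hj'i ▸ hj'adj)
    · have hadj2 : G.Adj i j' := hClique i j' hi hj' (fun h => hj'i h.symm)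
      have hjj' : j ≠ j' := by intro h; rw [h] at hj; omega
      rcases lt_trichotomy j' j with h1 | h1 | h1
      · -- j' < j < i
        have h1i : j' < i := lt_trans h1 hji
        exact key (hG i j' j hadj2.symm hj'adj hji.ne' (Or.inl ⟨h1i, h1⟩))
      · exact absurd h1.symm hjj'
      · rcases lt_trichotomy j' i with h2 | h2 | h2
        · -- j < j' < i : use neighbor of j' one step closer
          obtain ⟨j'', hj''adj, hj''⟩ := exists_nbr_closer G hconn j' hj'
          have hj''lt : j'' < j' := ihM j'' j' hj'' hj'
          have hjj'' : j ≠ j'' := by intro h; rw [h] at hj; omega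
          have : G.Adj j j'' := hG j j' j'' hj'adj hj''adj.symm hjj'' (Or.inr ⟨h1, hj''lt⟩)
          have := hadj_dist j'' j this.symm
          omega
        · exact absurd h2 hj'i
        · -- i < j' (and j < j') : closed at j'
          exact key (hG i j' j hadj2.symm hj'adj hji.ne'
            (Or.inr ⟨h2, lt_trans hji h2⟩))

theorem layer_complete {n : ℕ} (G : SimpleGraph (Fin (n + 1)))
    (hconn : G.Connected) (hG : IsClosedLabeling G) (N : ℕ) :
    ∀ i ∈ layer G N, ∀ j ∈ layer G N, i ≠ j → G.Adj i j := by
  intro i hi j hj hij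
  exact (layer_key G hconn hG N).1 i j hi hj hij
end

section
/- Let G be a connected graph with a closed labeling, with layers L_N = {i : dist(1,i) = N}. If d = max(L_N), then L_{N+1} = N^>(d) = {j ∈ N(d) : j > d}. -/
theorem SimpleGraph.Connected.exists_adj_dist_eq_of_dist_eq_add_one {V : Type*}
    {G : SimpleGraph V} (hconn : G.Connected) {u v : V} {N : ℕ}
    (h : G.dist u v = N + 1) : ∃ w, G.Adj w v ∧ G.dist u w = N := by
  obtain ⟨p, hp⟩ := hconn.exists_walk_length_eq_dist v u
  cases p with
  | nil => simp at h
  | @cons _ w _ hvw q =>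
    have hq : q.length = N := by simp [SimpleGraph.dist_comm, h] at hp; omega
    have hle : G.dist u w ≤ N := hq ▸ SimpleGraph.dist_comm (G := G) ▸ SimpleGraph.dist_le q
    have htri : G.dist u v ≤ G.dist u w + G.dist w v := hconn.dist_triangle
    rw [SimpleGraph.dist_eq_one_iff_adj.mpr hvw.symm] at htri
    exact ⟨w, hvw.symm, by omega⟩

namespace IsClosedLabeling

variable {n : ℕ} {G : SimpleGraph (Fin n)}

theorem adj_of_common_smaller_neighbor (hG : IsClosedLabeling G) {a b c : Fin n}
    (hab : G.Adj a b) (hac : G.Adj a c) (hlt₁ : a < b) (hlt₂ : b < c) : G.Adj b c :=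
  hG b a c hab hac hlt₂.ne (.inl ⟨hlt₁, hlt₁.trans hlt₂⟩)

theorem adj_of_common_larger_neighbor (hG : IsClosedLabeling G) {a b c : Fin n}
    (hac : G.Adj a c) (hbc : G.Adj b c) (hlt₁ : a < b) (hlt₂ : b < c) : G.Adj a b :=
  hG a c b hac.symm hbc.symm hlt₁.ne (.inr ⟨hlt₁.trans hlt₂, hlt₂⟩)

theorem exists_adj_lt_of_walk (hG : IsClosedLabeling G) {u v : Fin n} (W : G.Walk u v)
    (hv : v < u) : ∃ w, G.Adj u w ∧ w < u ∧ ∃ W' : G.Walk w v, W'.length < W.length := by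
  match W with
  | .nil => exact absurd hv (lt_irrefl _)
  | .cons (v := p) hup W' =>
    rcases lt_trichotomy p u with hpu | rfl | hup'
    · exact ⟨p, hup, hpu, W', by simp⟩
    · exact absurd hup (G.loopless.irrefl _)
    obtain ⟨q, hpq, hqp, W₂, hW₂⟩ := exists_adj_lt_of_walk hG W' (hv.trans hup')
    rcases lt_or_ge q u with hqu | huq
    · exact ⟨q, (hG.adj_of_common_larger_neighbor hpq.symm hup hqu hup').symm, hqu, W₂,
        by simp; omega⟩
    suffices ∃ W'' : G.Walk u v, W''.length ≤ W'.length by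
      obtain ⟨W'', hW''⟩ := this
      obtain ⟨w, huw, hwu, W₃, hW₃⟩ := exists_adj_lt_of_walk hG W'' hv
      exact ⟨w, huw, hwu, W₃, by simp; omega⟩
    rcases huq.eq_or_lt with rfl | huq
    · exact ⟨W₂, hW₂.le⟩
    · exact ⟨.cons (hG.adj_of_common_larger_neighbor hup hpq.symm huq hqp) W₂, by simp; omega⟩
termination_by W.length

section Connected

variable {n : ℕ} {G : SimpleGraph (Fin (n + 1))}

theorem exists_adj_lt (hG : IsClosedLabeling G) (hconn : G.Connected) {i : Fin (n + 1)}
    (hi : 0 < i) : ∃ w, G.Adj i w ∧ w < i := by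
  obtain ⟨W⟩ := hconn.preconnected i 0
  obtain ⟨w, hiw, hwi, -⟩ := hG.exists_adj_lt_of_walk W hi
  exact ⟨w, hiw, hwi⟩

theorem adj_and_adj_of_lt_of_lt (hG : IsClosedLabeling G) (hconn : G.Connected)
    {a b c : Fin (n + 1)} (hab : G.Adj a b) (hac : a < c) (hcb : c < b) :
    G.Adj a c ∧ G.Adj c b := by
  obtain ⟨m, hcm, hmc⟩ := hG.exists_adj_lt hconn ((Fin.zero_le a).trans_lt hac)
  have key : G.Adj a c ∨ G.Adj c b := by
    rcases lt_trichotomy m a with hma | rfl | ham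
    · exact .inl (hG.adj_and_adj_of_lt_of_lt hconn hcm.symm hma hac).2
    · exact .inl hcm.symm
    · have hmb := (hG.adj_and_adj_of_lt_of_lt hconn hab ham (hmc.trans hcb)).2
      exact .inr (hG.adj_of_common_smaller_neighbor hcm.symm hmb hmc hcb)
  rcases key with hac' | hcb'
  · exact ⟨hac', hG.adj_of_common_smaller_neighbor hac' hab hac hcb⟩
  · exact ⟨hG.adj_of_common_larger_neighbor hab hcb' hac hcb, hcb'⟩
termination_by (c : ℕ)
decreasing_by all_goals omega

theorem monotone_dist_zero (hG : IsClosedLabeling G) (hconn : G.Connected) :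
    Monotone (G.dist 0) := by
  intro i j hij
  induction hj : G.dist 0 j using Nat.strong_induction_on generalizing i j with
  | _ k ih =>
    rcases hij.eq_or_lt with rfl | hij
    · exact hj.le
    obtain ⟨k, rfl⟩ : ∃ k', k = k' + 1 := Nat.exists_eq_succ_of_ne_zero <| hj ▸
      (hconn.pos_dist_of_ne ((Fin.zero_le i).trans_lt hij).ne).ne'
    obtain ⟨u, huj, hu⟩ := hconn.exists_adj_dist_eq_of_dist_eq_add_one hj
    rcases le_or_gt i u with hiu | hui
    · exact (ih k k.lt_succ_self hiu hu).trans k.le_succ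
    · have hui' : G.dist u i = 1 := SimpleGraph.dist_eq_one_iff_adj.mpr
        (hG.adj_and_adj_of_lt_of_lt hconn huj hui hij).1
      have := hconn.dist_triangle (u := 0) (v := u) (w := i)
      omega

end Connected

end IsClosedLabeling

theorem next_layer_eq_upNbhd_of_max {n : ℕ} (G : SimpleGraph (Fin (n + 1)))
    (hconn : G.Connected) (hG : IsClosedLabeling G) (N : ℕ) (d : Fin (n + 1))
    (hd : IsGreatest (layer G N) d) :
    layer G (N + 1) = {j : Fin (n + 1) | G.Adj d j ∧ d < j} := by
  obtain ⟨hdN, hd_max⟩ := hd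
  change G.dist 0 d = N at hdN
  have hmono := hG.monotone_dist_zero hconn
  ext j
  change G.dist 0 j = N + 1 ↔ G.Adj d j ∧ d < j
  constructor
  · intro hj
    have hdj : d < j := lt_of_not_ge fun hjd => by
      have := hmono hjd
      omega
    obtain ⟨u, huj, hu⟩ := hconn.exists_adj_dist_eq_of_dist_eq_add_one hj
    rcases (hd_max hu).eq_or_lt with rfl | hud
    · exact ⟨huj, hdj⟩
    · exact ⟨(hG.adj_and_adj_of_lt_of_lt hconn huj hud hdj).2, hdj⟩
  · rintro ⟨hdj, hlt⟩
    have hne : G.dist 0 j ≠ N := fun hjN => (hd_max hjN).not_gt hlt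
    have hle := hmono hlt.le
    have htri := hconn.dist_triangle (u := 0) (v := d) (w := j)
    rw [SimpleGraph.dist_eq_one_iff_adj.mpr hdj] at htri
    omega
end

section
/- If G is a connected graph with a closed labeling by [n], then the diameter of G equals the maximum N such that L_N = {i : dist(1,i) = N} is nonempty. -/
open SimpleGraph

/-- Restriction of a walk avoiding nothing: if the closed graph `G` on `Fin (m+1)` has a walk
between two vertices below `m`, then they are reachable in the comap along `castSucc`. -/
lemma shrink_reach (m : ℕ) (G : SimpleGraph (Fin (m + 1))) (hG : IsClosedLabeling G) :
    ∀ (k : ℕ) (a b : Fin (m + 1)) (w : G.Walk a b), w.length ≤ k →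
      ∀ (ha : (a : ℕ) < m) (hb : (b : ℕ) < m),
      (G.comap Fin.castSucc).Reachable ⟨(a : ℕ), ha⟩ ⟨(b : ℕ), hb⟩ := by
  intro k
  induction k using Nat.strong_induction_on with
  | _ k ihk =>
  intro a b w hw ha hb
  cases w with
  | nil => exact Reachable.refl _
  | @cons _ c _ h w' =>
    by_cases hcm : (c : ℕ) < m
    · have hadj : (G.comap Fin.castSucc).Adj ⟨(a : ℕ), ha⟩ ⟨(c : ℕ), hcm⟩ := by
        simp only [comap_adj]
        have e1 : Fin.castSucc (⟨(a : ℕ), ha⟩ : Fin m) = a := by ext; simp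
        have e2 : Fin.castSucc (⟨(c : ℕ), hcm⟩ : Fin m) = c := by ext; simp
        rw [e1, e2]; exact h
      have hlen : w'.length < k := by
        have := SimpleGraph.Walk.length_cons h w' ▸ hw
        omega
      exact hadj.reachable.trans (ihk w'.length hlen c b w' le_rfl hcm hb)
    · have hcv : (c : ℕ) = m := by omega
      cases w' with
      | nil => omega
      | @cons _ d _ h2 w'' =>
        have hdm : (d : ℕ) < m := by
          have hne : d ≠ c := h2.ne'
          have : (d : ℕ) ≤ m := by omega
          rcases lt_or_eq_of_le this with h' | h'
          · exact h'
          · exact absurd (Fin.ext (h'.trans hcv.symm)) hne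
        have hlen : w''.length < k := by
          have h3 : (SimpleGraph.Walk.cons h (SimpleGraph.Walk.cons h2 w'')).length
              = w''.length + 2 := by simp [SimpleGraph.Walk.length_cons]
          omega
        have hrest := ihk w''.length hlen d b w'' le_rfl hdm hb
        by_cases had : a = d
        · have : (⟨(a : ℕ), ha⟩ : Fin m) = ⟨(d : ℕ), hdm⟩ := by
            ext; simp [had]
          rw [this]; exact hrest
        · have hadj : G.Adj a d := by
            apply hG a c d h.symm h2 had
            right
            constructor
            · rw [Fin.lt_def]; omega
            · rw [Fin.lt_def]; omega
          have hadj' : (G.comap Fin.castSucc).Adj ⟨(a : ℕ), ha⟩ ⟨(d : ℕ), hdm⟩ := by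
            simp only [comap_adj]
            have e1 : Fin.castSucc (⟨(a : ℕ), ha⟩ : Fin m) = a := by ext; simp
            have e2 : Fin.castSucc (⟨(d : ℕ), hdm⟩ : Fin m) = d := by ext; simp
            rw [e1, e2]; exact hadj
          exact hadj'.reachable.trans hrest

/-- In a connected closed graph, consecutive vertices are adjacent. -/
lemma closed_consec : ∀ (N : ℕ) (G : SimpleGraph (Fin N)), G.Connected → IsClosedLabeling G →
    ∀ i j : Fin N, (i : ℕ) + 1 = (j : ℕ) → G.Adj i j := by
  intro N
  induction N using Nat.strong_induction_on with
  | _ N ih =>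
  intro G hc hG i j hij
  obtain ⟨m, rfl⟩ : ∃ m, N = m + 1 := ⟨N - 1, by have := i.pos; omega⟩
  have hm : 1 ≤ m := by have := j.isLt; omega
  -- the restricted graph
  set G' : SimpleGraph (Fin m) := G.comap Fin.castSucc with hG'def
  have hG' : IsClosedLabeling G' := by
    intro u v w h1 h2 hne hord
    simp only [hG'def, comap_adj] at h1 h2 ⊢
    apply hG _ _ _ h1 h2
    · exact fun h => hne (Fin.castSucc_injective _ h)
    · rcases hord with ⟨h3, h4⟩ | ⟨h3, h4⟩
      · exact Or.inl ⟨by simpa using h3, by simpa using h4⟩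
      · exact Or.inr ⟨by simpa using h3, by simpa using h4⟩
  have hc' : G'.Connected := by
    rw [SimpleGraph.connected_iff]
    refine ⟨fun x y => ?_, ⟨⟨0, hm⟩⟩⟩
    obtain ⟨w⟩ := hc.preconnected x.castSucc y.castSucc
    have hx : ((x.castSucc : Fin (m+1)) : ℕ) < m := by simp [x.isLt]
    have hy : ((y.castSucc : Fin (m+1)) : ℕ) < m := by simp [y.isLt]
    have := shrink_reach m G hG w.length x.castSucc y.castSucc w le_rfl hx hy
    have e1 : (⟨((x.castSucc : Fin (m+1)) : ℕ), hx⟩ : Fin m) = x := by ext; simp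
    have e2 : (⟨((y.castSucc : Fin (m+1)) : ℕ), hy⟩ : Fin m) = y := by ext; simp
    rwa [e1, e2] at this
  have hcons' := ih m (by omega) G' hc' hG'
  have hconsG : ∀ p q : Fin (m + 1), (p : ℕ) + 1 = (q : ℕ) → (q : ℕ) < m → G.Adj p q := by
    intro p q hpq hq
    have hp : (p : ℕ) < m := by omega
    have := hcons' ⟨(p : ℕ), hp⟩ ⟨(q : ℕ), hq⟩ (by simpa using hpq)
    simp only [hG'def, comap_adj] at this
    have e1 : Fin.castSucc (⟨(p : ℕ), hp⟩ : Fin m) = p := by ext; simp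
    have e2 : Fin.castSucc (⟨(q : ℕ), hq⟩ : Fin m) = q := by ext; simp
    rwa [e1, e2] at this
  by_cases hj : (j : ℕ) < m
  · exact hconsG i j hij hj
  · have hjm : (j : ℕ) = m := by have := j.isLt; omega
    -- find a neighbor of j
    have h0j : (0 : Fin (m+1)) ≠ j := by
      intro h
      have : ((0 : Fin (m+1)) : ℕ) = (j : ℕ) := congrArg _ h
      simp at this
      omega
    obtain ⟨w⟩ := hc.preconnected j 0
    obtain ⟨c0, hc0⟩ : ∃ c, G.Adj j c := by
      cases w with
      | nil => exact absurd rfl h0j.symm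
      | cons h _ => exact ⟨_, h⟩
    -- climb up to m - 1
    have him : (i : ℕ) = m - 1 := by omega
    have climb : ∀ d : ℕ, ∀ c : Fin (m + 1), G.Adj j c → (c : ℕ) + d = m - 1 → G.Adj j i := by
      intro d
      induction d with
      | zero =>
        intro c hcadj hcv
        have : c = i := by ext; omega
        rwa [this] at hcadj
      | succ d ihd =>
        intro c hcadj hcv
        have hc1 : (c : ℕ) + 1 < m := by omega
        have hadj1 : G.Adj c ⟨(c : ℕ) + 1, by omega⟩ := hconsG c _ (by simp) (by simpa using hc1)
        have hjc : G.Adj j ⟨(c : ℕ) + 1, by omega⟩ := by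
          apply hG j c _ hcadj.symm hadj1
          · intro h
            have : (j : ℕ) = (c : ℕ) + 1 := congrArg Fin.val h
            omega
          · left
            constructor
            · rw [Fin.lt_def]; omega
            · rw [Fin.lt_def]; simp only [Fin.val_mk]; omega
        exact ihd _ hjc (by simp only [Fin.val_mk]; omega)
    have hc0v : (c0 : ℕ) ≤ m - 1 := by
      have hne : c0 ≠ j := hc0.ne'
      have : (c0 : ℕ) ≤ m := by have := c0.isLt; omega
      rcases lt_or_eq_of_le this with h' | h'
      · omega
      · exact absurd (Fin.ext (h'.trans hjm.symm)) hne
    exact (climb (m - 1 - (c0 : ℕ)) c0 hc0 (by omega)).symm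

/-- Lower umbrella: if `x ~ y` and `x < z < y` then `x ~ z`. -/
lemma closed_umbrella {N : ℕ} (G : SimpleGraph (Fin N)) (hc : G.Connected)
    (hG : IsClosedLabeling G) :
    ∀ (d : ℕ) (x z y : Fin N), (z : ℕ) + d = (y : ℕ) → x < z → G.Adj x y → G.Adj x z := by
  intro d
  induction d with
  | zero =>
    intro x z y h hxz hadj
    have : z = y := by ext; omega
    rwa [this]
  | succ d ihd =>
    intro x z y h hxz hadj
    have hy1 : 1 ≤ (y : ℕ) := by omega
    have hyN : (y : ℕ) - 1 < N := by have := y.isLt; omega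
    set y' : Fin N := ⟨(y : ℕ) - 1, hyN⟩ with hy'def
    have hcons : G.Adj y' y := closed_consec N G hc hG y' y (by simp [hy'def]; omega)
    have hxy' : (x : ℕ) < (y : ℕ) - 1 := by
      have := Fin.lt_def.mp hxz
      omega
    have hxyadj : G.Adj x y' := by
      apply hG x y y' hadj.symm hcons.symm
      · intro hx
        have : (x : ℕ) = (y : ℕ) - 1 := congrArg Fin.val hx
        omega
      · right
        constructor
        · exact Fin.lt_def.mpr (by omega)
        · exact Fin.lt_def.mpr (by simp [hy'def]; omega)
    exact ihd x z y' (by simp [hy'def]; omega) hxz hxyadj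


/-- Upper umbrella: if `x ~ y` and `x < z < y` then `z ~ y`. -/
lemma closed_umbrella_up {N : ℕ} (G : SimpleGraph (Fin N)) (hc : G.Connected)
    (hG : IsClosedLabeling G) :
    ∀ (d : ℕ) (x z y : Fin N), (x : ℕ) + d = (z : ℕ) → z < y → G.Adj x y → G.Adj z y := by
  intro d
  induction d with
  | zero =>
    intro x z y h hzy hadj
    have : x = z := by ext; omega
    rwa [← this]
  | succ d ihd =>
    intro x z y h hzy hadj
    have hx1 : (x : ℕ) + 1 < N := by have := z.isLt; omega
    set x' : Fin N := ⟨(x : ℕ) + 1, hx1⟩ with hx'def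
    have hcons : G.Adj x x' := closed_consec N G hc hG x x' (by simp [hx'def])
    have hzy' : (x : ℕ) + 1 ≤ (z : ℕ) := by omega
    have hx'y : G.Adj x' y := by
      have := Fin.lt_def.mp hzy
      refine (hG y x x' hadj hcons ?_ (Or.inl ⟨Fin.lt_def.mpr (by omega), Fin.lt_def.mpr (by simp [hx'def])⟩)).symm
      intro hx
      have : (y : ℕ) = (x : ℕ) + 1 := congrArg Fin.val hx
      omega
    exact ihd x' z y (by simp [hx'def]; omega) hzy hx'y

/-- Key lemma: given a walk from `a` to `v` and `a ≤ u ≤ v`, `dist u v` is at most the length. -/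
lemma closed_key {N : ℕ} (G : SimpleGraph (Fin N)) (hc : G.Connected)
    (hG : IsClosedLabeling G) :
    ∀ {a v : Fin N} (w : G.Walk a v) (u : Fin N), a ≤ u → u ≤ v → G.dist u v ≤ w.length := by
  intro a v w
  induction w with
  | nil =>
    intro u h1 h2
    have : u = _ := le_antisymm h2 h1
    simp [this, SimpleGraph.dist_self]
  | @cons a b v h w' ih =>
    intro u h1 h2
    rcases eq_or_lt_of_le h2 with rfl | huv
    · simp [SimpleGraph.dist_self]
    rcases le_or_gt b u with hbu | hub
    · have := ih u hbu h2
      have hl : w'.length ≤ (SimpleGraph.Walk.cons h w').length := by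
        simp [SimpleGraph.Walk.length_cons]
      omega
    · rcases le_or_gt b v with hbv | hvb
      · -- u < b ≤ v
        have hub' : G.Adj u b := by
          rcases eq_or_lt_of_le h1 with heq | hau
          · rw [← heq]; exact h
          · exact closed_umbrella_up G hc hG ((u : ℕ) - (a : ℕ)) a u b
              (by have := Fin.lt_def.mp hau; omega) hub h
        have h3 : G.dist u v ≤ G.dist u b + G.dist b v := hc.dist_triangle
        have h4 : G.dist u b ≤ 1 := by
          have := SimpleGraph.dist_le hub'.toWalk
          simpa using this
        have h5 := ih b le_rfl hbv
        have h6 : (SimpleGraph.Walk.cons h w').length = w'.length + 1 := by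
          simp [SimpleGraph.Walk.length_cons]
        omega
      · -- v < b
        have huv' : G.Adj u v := by
          rcases eq_or_lt_of_le h1 with heq | hau
          · rw [← heq]; rw [← heq] at huv
            exact closed_umbrella G hc hG ((b : ℕ) - (v : ℕ)) a v b
              (by have := Fin.lt_def.mp hvb; omega) huv h
          · have h6 : G.Adj a u := closed_umbrella G hc hG ((b : ℕ) - (u : ℕ)) a u b
              (by have := Fin.lt_def.mp hub; omega) hau h
            have h7 : G.Adj a v := closed_umbrella G hc hG ((b : ℕ) - (v : ℕ)) a v b
              (by have := Fin.lt_def.mp hvb; omega) (hau.trans huv) h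
            exact hG u a v h6 h7 huv.ne (Or.inl ⟨hau, hau.trans huv⟩)
        have h8 : G.dist u v ≤ 1 := by
          have := SimpleGraph.dist_le huv'.toWalk
          simpa using this
        have h9 : (SimpleGraph.Walk.cons h w').length = w'.length + 1 := by
          simp [SimpleGraph.Walk.length_cons]
        omega

theorem diam_eq_max_layer {n : ℕ} (G : SimpleGraph (Fin (n + 1)))
    (hconn : G.Connected) (hG : IsClosedLabeling G) :
    G.diam = sSup {N : ℕ | (layer G N).Nonempty} := by
  have hS0 : (0 : ℕ) ∈ {N : ℕ | (layer G N).Nonempty} :=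
    ⟨0, by simp [layer, SimpleGraph.dist_self]⟩
  have hne : G.ediam ≠ ⊤ := by
    obtain ⟨u, v, huv⟩ := SimpleGraph.exists_edist_eq_ediam_of_finite (G := G)
    rw [← huv]
    exact SimpleGraph.edist_ne_top_iff_reachable.mpr (hconn.preconnected u v)
  have hbdd : BddAbove {N : ℕ | (layer G N).Nonempty} := by
    refine ⟨G.diam, ?_⟩
    rintro N ⟨i, hi⟩
    exact hi ▸ SimpleGraph.dist_le_diam hne
  apply le_antisymm
  · obtain ⟨u, v, huv⟩ := SimpleGraph.exists_dist_eq_diam (G := G)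
    have main : ∀ u v : Fin (n + 1), u ≤ v → G.dist u v ≤ sSup {N : ℕ | (layer G N).Nonempty} := by
      intro u v huv'
      obtain ⟨w, hw⟩ := (hconn.preconnected 0 v).exists_walk_length_eq_dist
      have hkey := closed_key G hconn hG w u (Fin.zero_le u) huv'
      rw [hw] at hkey
      exact hkey.trans (le_csSup hbdd ⟨v, rfl⟩)
    rcases le_total u v with h | h
    · rw [← huv]; exact main u v h
    · rw [← huv, SimpleGraph.dist_comm]; exact main v u h
  · refine csSup_le ⟨0, hS0⟩ ?_
    rintro N ⟨i, hi⟩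
    exact hi ▸ SimpleGraph.dist_le_diam hne
end

section
/- A closed connected graph G with at least three vertices has exactly two closed labelings if and only if G is collapsed (i.e., N[v] = N[w] implies v = w). More precisely: if G is a closed graph with at least three vertices, then G has exactly two closed labelings iff G is connected and collapsed. -/
/-- A labeling `ℓ : V ≃ Fin n` of a graph `G` is closed if whenever two edges
point away from a vertex or towards a vertex (w.r.t. the labels), the other
endpoints are adjacent. -/
def ClosedLabelingOf {V : Type*} {n : ℕ} (G : SimpleGraph V) (ℓ : V ≃ Fin n) : Prop :=
  ∀ u v w : V, G.Adj v u → G.Adj v w → u ≠ w →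
    ((ℓ v < ℓ u ∧ ℓ v < ℓ w) ∨ (ℓ u < ℓ v ∧ ℓ w < ℓ v)) → G.Adj u w

/-- A graph is collapsed if distinct vertices have distinct full neighborhoods. -/
def Collapsed {V : Type*} (G : SimpleGraph V) : Prop :=
  ∀ v w : V, fullNbhd G v = fullNbhd G w → v = w

section Aux
variable {V : Type*} {n : ℕ} {G : SimpleGraph V} {ℓ m : V ≃ Fin n}

lemma closed_rev (h : ClosedLabelingOf G ℓ) :
    ClosedLabelingOf G (ℓ.trans Fin.revPerm) := by
  intro u v w hvu hvw huw hpat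
  refine h u v w hvu hvw huw ?_
  simp only [Equiv.trans_apply, Fin.revPerm_apply, Fin.rev_lt_rev] at hpat
  tauto

lemma closed_of_mono_reachable (h : ClosedLabelingOf G ℓ)
    (hmono : ∀ a b : V, G.Reachable a b → (ℓ a < ℓ b ↔ m a < m b)) :
    ClosedLabelingOf G m := by
  intro u v w hvu hvw huw hpat
  refine h u v w hvu hvw huw ?_
  have h1 := hmono v u hvu.reachable
  have h2 := hmono v w hvw.reachable
  have h3 := hmono u v hvu.symm.reachable
  have h4 := hmono w v hvw.symm.reachable
  tauto

lemma closed_comp_aut (h : ClosedLabelingOf G ℓ) (e : V ≃ V)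
    (he : ∀ a b : V, G.Adj (e a) (e b) ↔ G.Adj a b) :
    ClosedLabelingOf G (e.trans ℓ) := by
  intro u v w hvu hvw huw hpat
  rw [← he]
  refine h (e u) (e v) (e w) ((he v u).2 hvu) ((he v w).2 hvw)
    (fun hh => huw (e.injective hh)) ?_
  simpa using hpat

lemma exists_bounded_walk (hℓ : ClosedLabelingOf G ℓ) :
    ∀ (k : ℕ) (a b : V) (p : G.Walk a b), p.length ≤ k →
    ∃ q : G.Walk a b, q.length ≤ p.length ∧
      ∀ c ∈ q.support, min (ℓ a) (ℓ b) ≤ ℓ c ∧ ℓ c ≤ max (ℓ a) (ℓ b) := by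
  intro k
  induction k using Nat.strong_induction_on with
  | _ k IH =>
  intro a b p hp
  cases p with
  | nil => exact ⟨.nil, le_refl _, by simp⟩
  | @cons _ x _ h p' =>
    have hpk : p'.length < k := lt_of_lt_of_le (Nat.lt_succ_self _) (by simpa using hp)
    by_cases hx : min (ℓ a) (ℓ b) ≤ ℓ x ∧ ℓ x ≤ max (ℓ a) (ℓ b)
    · obtain ⟨q', hq'len, hq'b⟩ := IH p'.length hpk x b p' le_rfl
      refine ⟨.cons h q', by simpa using Nat.add_le_add_right hq'len 1, ?_⟩
      intro c hc
      rw [SimpleGraph.Walk.support_cons, List.mem_cons] at hc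
      rcases hc with rfl | hc
      · exact ⟨min_le_left _ _, le_max_left _ _⟩
      · obtain ⟨h1, h2⟩ := hq'b c hc
        exact ⟨le_trans (le_min hx.1 (min_le_right _ _)) h1,
               le_trans h2 (max_le hx.2 (le_max_right _ _))⟩
    · obtain ⟨q', hq'len, hq'b⟩ := IH p'.length hpk x b p' le_rfl
      rcases not_and_or.1 hx with hlt | hgt
      · push_neg at hlt
        cases q' with
        | nil => exact absurd hlt (not_lt.2 (min_le_right _ _))
        | @cons _ y _ h2 q'' =>
          have hyb : min (ℓ x) (ℓ b) ≤ ℓ y ∧ ℓ y ≤ max (ℓ x) (ℓ b) := by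
            refine hq'b y ?_
            rw [SimpleGraph.Walk.support_cons]
            exact List.mem_cons_of_mem _ q''.start_mem_support
          have hxb : ℓ x < ℓ b := lt_of_lt_of_le hlt (min_le_right _ _)
          have hxa : ℓ x < ℓ a := lt_of_lt_of_le hlt (min_le_left _ _)
          have hyx : ℓ x < ℓ y := by
            have hle : ℓ x ≤ ℓ y := le_trans (le_min le_rfl hxb.le) hyb.1
            exact lt_of_le_of_ne hle (fun h' => h2.ne (ℓ.injective h'))
          by_cases hay : a = y
          · subst hay
            have hlen : q''.length < k :=
              lt_of_lt_of_le (Nat.lt_succ_self _) (le_trans (by simpa using hq'len) hpk.le)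
            obtain ⟨q, hq, hqb⟩ := IH q''.length hlen a b q'' le_rfl
            exact ⟨q, le_trans hq (by simp at hq'len ⊢; omega), hqb⟩
          · have hadj : G.Adj a y :=
              hℓ a x y h.symm h2 hay (Or.inl ⟨hxa, hyx⟩)
            have hw : (SimpleGraph.Walk.cons hadj q'').length ≤ p'.length := by
              simp at hq'len ⊢; omega
            obtain ⟨q, hq, hqb⟩ := IH p'.length hpk a b (.cons hadj q'') hw
            exact ⟨q, le_trans (le_trans hq hw) (by simp), hqb⟩
      · push_neg at hgt
        cases q' with
        | nil => exact absurd hgt (not_lt.2 (le_max_right _ _))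
        | @cons _ y _ h2 q'' =>
          have hyb : min (ℓ x) (ℓ b) ≤ ℓ y ∧ ℓ y ≤ max (ℓ x) (ℓ b) := by
            refine hq'b y ?_
            rw [SimpleGraph.Walk.support_cons]
            exact List.mem_cons_of_mem _ q''.start_mem_support
          have hxb : ℓ b < ℓ x := lt_of_le_of_lt (le_max_right _ _) hgt
          have hxa : ℓ a < ℓ x := lt_of_le_of_lt (le_max_left _ _) hgt
          have hyx : ℓ y < ℓ x := by
            have hle : ℓ y ≤ ℓ x := le_trans hyb.2 (max_le le_rfl hxb.le)
            exact lt_of_le_of_ne hle (fun h' => h2.ne' (ℓ.injective h'))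
          by_cases hay : a = y
          · subst hay
            have hlen : q''.length < k :=
              lt_of_lt_of_le (Nat.lt_succ_self _) (le_trans (by simpa using hq'len) hpk.le)
            obtain ⟨q, hq, hqb⟩ := IH q''.length hlen a b q'' le_rfl
            exact ⟨q, le_trans hq (by simp at hq'len ⊢; omega), hqb⟩
          · have hadj : G.Adj a y :=
              hℓ a x y h.symm h2 hay (Or.inr ⟨hxa, hyx⟩)
            have hw : (SimpleGraph.Walk.cons hadj q'').length ≤ p'.length := by
              simp at hq'len ⊢; omega
            obtain ⟨q, hq, hqb⟩ := IH p'.length hpk a b (.cons hadj q'') hw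
            exact ⟨q, le_trans (le_trans hq hw) (by simp), hqb⟩

lemma adj_consec_s10 (hℓ : ClosedLabelingOf G ℓ) (hconn : G.Preconnected) {a b : V}
    (hab : (ℓ b).val = (ℓ a).val + 1) : G.Adj a b := by
  have hne : a ≠ b := fun h => by simp [h] at hab
  have hlt : ℓ a < ℓ b := by rw [Fin.lt_def]; omega
  obtain ⟨p⟩ := hconn a b
  obtain ⟨q, _, hqb⟩ := exists_bounded_walk hℓ p.length a b p le_rfl
  cases q with
  | nil => exact absurd rfl hne
  | @cons _ x _ h q' =>
    have hxb : min (ℓ a) (ℓ b) ≤ ℓ x ∧ ℓ x ≤ max (ℓ a) (ℓ b) := by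
      refine hqb x ?_
      rw [SimpleGraph.Walk.support_cons]
      exact List.mem_cons_of_mem _ q'.start_mem_support
    rw [min_eq_left hlt.le, max_eq_right hlt.le] at hxb
    have : x = b := by
      have h1 : (ℓ a).val ≤ (ℓ x).val := hxb.1
      have h2 : (ℓ x).val ≤ (ℓ b).val := hxb.2
      have hax : x ≠ a := h.ne'
      have : (ℓ x).val ≠ (ℓ a).val := fun hh => hax (ℓ.injective (Fin.ext hh))
      apply ℓ.injective; apply Fin.ext; omega
    exact this ▸ h

lemma adj_between (hℓ : ClosedLabelingOf G ℓ) (hconn : G.Preconnected) :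
    ∀ (d : ℕ) {a b c : V}, G.Adj a b → (ℓ b).val ≤ (ℓ a).val + d →
    ℓ a < ℓ c → ℓ c < ℓ b → G.Adj a c ∧ G.Adj c b := by
  intro d
  induction d with
  | zero => intro a b c _ hle h1 h2; rw [Fin.lt_def] at h1 h2; omega
  | succ d IH =>
    intro a b c hadj hle h1 h2
    rw [Fin.lt_def] at h1 h2
    have hbpos : 1 ≤ (ℓ b).val := by omega
    have hblt : (ℓ b).val - 1 < n := by omega
    set b' : V := ℓ.symm ⟨(ℓ b).val - 1, hblt⟩ with hb'
    have hlb' : (ℓ b').val = (ℓ b).val - 1 := by simp [hb']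
    have hadjb' : G.Adj b' b := adj_consec_s10 hℓ hconn (by omega)
    have hab' : a ≠ b' := fun h => by rw [h] at h1; omega
    have hadjab' : G.Adj a b' := by
      refine hℓ a b b' hadj.symm hadjb'.symm hab' (Or.inr ⟨?_, ?_⟩)
      · rw [Fin.lt_def]; omega
      · rw [Fin.lt_def]; omega
    by_cases hc : c = b'
    · exact ⟨hc ▸ hadjab', hc ▸ hadjb'⟩
    · have hcb' : (ℓ c).val < (ℓ b').val := by
        have : (ℓ c).val ≠ (ℓ b').val := fun hh => hc (ℓ.injective (Fin.ext hh))
        omega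
      obtain ⟨hac, -⟩ := IH (c := c) hadjab' (by omega) (by rw [Fin.lt_def]; omega)
        (by rw [Fin.lt_def]; omega)
      refine ⟨hac, ?_⟩
      have hbc : b ≠ c := fun h => by rw [h] at h2; omega
      exact (hℓ b a c hadj hac hbc
        (Or.inl ⟨by rw [Fin.lt_def]; omega, by rw [Fin.lt_def]; omega⟩)).symm

lemma mem_fullNbhd {v z : V} : z ∈ fullNbhd G v ↔ z = v ∨ G.Adj v z := by
  simp [fullNbhd, or_comm]

lemma nbhd_sub_aux (hℓ : ClosedLabelingOf G ℓ) (hm : ClosedLabelingOf G m)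
    (hconn : G.Preconnected) {i : ℕ} (hi : i + 1 < n)
    (pref : ∀ j (hj : j ≤ i), ℓ.symm ⟨j, by omega⟩ = m.symm ⟨j, by omega⟩) :
    fullNbhd G (ℓ.symm ⟨i+1, hi⟩) ⊆ fullNbhd G (m.symm ⟨i+1, hi⟩) := by
  set x := ℓ.symm ⟨i+1, hi⟩ with hxdef
  set y := m.symm ⟨i+1, hi⟩ with hydef
  by_cases hxy : x = y
  · rw [hxy]
  have hlx : (ℓ x).val = i + 1 := by simp [hxdef]
  have hmy : (m y).val = i + 1 := by simp [hydef]
  have hmx : i + 1 < (m x).val := by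
    rcases lt_trichotomy (i+1) (m x).val with h | h | h
    · exact h
    · have heq : m x = ⟨i+1, hi⟩ := Fin.ext (show (m x).val = i+1 from h.symm)
      exact absurd (by rw [hydef, ← heq, Equiv.symm_apply_apply]) hxy
    · have hj : (m x).val ≤ i := by omega
      have := pref (m x).val hj
      rw [Fin.eta, Equiv.symm_apply_apply] at this
      have : (ℓ x).val = (m x).val := by
        conv_lhs => rw [← this]
        simp
      omega
  have hly : i + 1 < (ℓ y).val := by
    rcases lt_trichotomy (i+1) (ℓ y).val with h | h | h
    · exact h
    · have heq : ℓ y = ⟨i+1, hi⟩ := Fin.ext (show (ℓ y).val = i+1 from h.symm)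
      exact absurd (by rw [hxdef, ← heq, Equiv.symm_apply_apply]) hxy
    · have hj : (ℓ y).val ≤ i := by omega
      have := pref (ℓ y).val hj
      rw [Fin.eta, Equiv.symm_apply_apply] at this
      have : (m y).val = (ℓ y).val := by
        conv_lhs => rw [this]
        simp
      omega
  have hii : i < n := by omega
  set p := ℓ.symm ⟨i, hii⟩ with hpdef
  have hpm : p = m.symm ⟨i, hii⟩ := pref i le_rfl
  have hlp : (ℓ p).val = i := by simp [hpdef]
  have hmp : (m p).val = i := by rw [hpm]; simp
  have hpx : G.Adj p x := adj_consec_s10 hℓ hconn (by rw [hlx, hlp])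
  have hpy : G.Adj p y := adj_consec_s10 hm hconn (by rw [hmy, hmp])
  have hyx : G.Adj y x := by
    refine (adj_between hm hconn n hpx ?_ ?_ ?_).2
    · have := (m x).isLt; omega
    · rw [Fin.lt_def]; omega
    · rw [Fin.lt_def]; omega
  intro z hz
  rw [mem_fullNbhd] at hz ⊢
  rcases hz with rfl | hz
  · exact Or.inr hyx
  by_cases hzy : z = y
  · exact Or.inl hzy
  right
  by_cases hz2 : i + 1 < (ℓ z).val
  · exact (hℓ z x y hz hyx.symm hzy (Or.inl ⟨by rw [Fin.lt_def]; omega,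
      by rw [Fin.lt_def]; omega⟩)).symm
  · have hzx : z ≠ x := hz.ne'
    have hlz : (ℓ z).val ≤ i := by
      have : (ℓ z).val ≠ i + 1 := fun hh => by
        have heq : ℓ z = ⟨i+1, hi⟩ := Fin.ext (show (ℓ z).val = i+1 from hh)
        exact hzx (by rw [hxdef, ← heq, Equiv.symm_apply_apply])
      omega
    have hzpref := pref (ℓ z).val hlz
    rw [Fin.eta, Equiv.symm_apply_apply] at hzpref
    have hmz : (m z).val = (ℓ z).val := by conv_lhs => rw [hzpref]; simp
    refine ((adj_between hm hconn n hz.symm ?_ ?_ ?_).1).symm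
    · have := (m x).isLt; omega
    · rw [Fin.lt_def]; omega
    · rw [Fin.lt_def]; omega

lemma eq_of_symm_zero_eq (hℓ : ClosedLabelingOf G ℓ) (hm : ClosedLabelingOf G m)
    (hconn : G.Preconnected) (hcol : Collapsed G) (hn : 0 < n)
    (h0 : ℓ.symm ⟨0, hn⟩ = m.symm ⟨0, hn⟩) : ℓ = m := by
  have key : ∀ i (hi : i < n), ℓ.symm ⟨i, hi⟩ = m.symm ⟨i, hi⟩ := by
    intro i
    induction i using Nat.strong_induction_on with
    | _ i IH =>
    intro hi
    match i, IH with
    | 0, _ => exact h0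
    | i + 1, IH =>
      have pref : ∀ j (hj : j ≤ i), ℓ.symm ⟨j, by omega⟩ = m.symm ⟨j, by omega⟩ :=
        fun j hj => IH j (by omega) (by omega)
      have h1 := nbhd_sub_aux hℓ hm hconn hi pref
      have pref' : ∀ j (hj : j ≤ i), m.symm ⟨j, by omega⟩ = ℓ.symm ⟨j, by omega⟩ :=
        fun j hj => (pref j hj).symm
      have h2 := nbhd_sub_aux hm hℓ hconn hi pref'
      exact hcol _ _ (Set.Subset.antisymm h1 h2)
  refine Equiv.ext fun v => ?_
  have := key (ℓ v).val (ℓ v).isLt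
  rw [Fin.eta, Equiv.symm_apply_apply] at this
  have h2 := congrArg m this
  rw [m.apply_symm_apply] at h2
  exact h2.symm

lemma nat_ivt (P : ℕ → Prop) : ∀ (k i : ℕ), i ≤ k → P i → ¬ P k →
    ∃ t, i ≤ t ∧ t < k ∧ P t ∧ ¬ P (t+1) := by
  intro k
  induction k with
  | zero => intro i hik hPi hPk; exact absurd ((Nat.le_zero.1 hik) ▸ hPi) hPk
  | succ k IH =>
    intro i hik hPi hPk
    by_cases hik' : i = k + 1
    · exact absurd (hik' ▸ hPi) hPk
    have hik2 : i ≤ k := by omega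
    by_cases hPk' : P k
    · exact ⟨k, hik2, Nat.lt_succ_self _, hPk', hPk⟩
    · obtain ⟨t, h1, h2, h3, h4⟩ := IH i hik2 hPi hPk'
      exact ⟨t, h1, by omega, h3, h4⟩

lemma symm_zero_extremal (hℓ : ClosedLabelingOf G ℓ) (hm : ClosedLabelingOf G m)
    (hconn : G.Preconnected) (hcol : Collapsed G) (hn : 0 < n) :
    (ℓ (m.symm ⟨0, hn⟩)).val = 0 ∨ (ℓ (m.symm ⟨0, hn⟩)).val = n - 1 := by
  classical
  by_contra hcon
  push_neg at hcon
  obtain ⟨h0, h1⟩ := hcon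
  set y := m.symm ⟨0, hn⟩ with hydef
  have hmy : (m y).val = 0 := by simp [hydef]
  set j := (ℓ y).val with hjdef
  have hjlt : j < n := (ℓ y).isLt
  have hj0 : 0 < j := Nat.pos_of_ne_zero h0
  have hjn : j < n - 1 := by omega
  -- neighbors of y form a clique
  have cliqueN : ∀ z1 z2 : V, G.Adj y z1 → G.Adj y z2 → z1 ≠ z2 → G.Adj z1 z2 := by
    intro z1 z2 hz1 hz2 h12
    refine hm z1 y z2 hz1 hz2 h12 (Or.inl ⟨?_, ?_⟩)
    · rw [Fin.lt_def, hmy]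
      exact Nat.pos_of_ne_zero (fun hh => hz1.ne (m.injective (Fin.ext (by rw [hmy, hh]))))
    · rw [Fin.lt_def, hmy]
      exact Nat.pos_of_ne_zero (fun hh => hz2.ne (m.injective (Fin.ext (by rw [hmy, hh]))))
  -- F : labels of the closed neighborhood of y
  set F : Finset (Fin n) := Finset.univ.filter (fun t => ℓ.symm t = y ∨ G.Adj y (ℓ.symm t))
    with hFdef
  have memF : ∀ z : V, ℓ z ∈ F ↔ (z = y ∨ G.Adj y z) := by
    intro z
    simp [hFdef]
  have hyF : ℓ y ∈ F := (memF y).2 (Or.inl rfl)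
  have hFne : F.Nonempty := ⟨ℓ y, hyF⟩
  set lo := F.min' hFne with hlodef
  set hi := F.max' hFne with hhidef
  set c := ℓ.symm lo with hcdef
  set d := ℓ.symm hi with hddef
  have hlc : (ℓ c).val = lo.val := by simp [hcdef]
  have hld : (ℓ d).val = hi.val := by simp [hddef]
  -- the lower and upper consecutive neighbors
  have haylt : j - 1 < n := by omega
  have hbylt : j + 1 < n := by omega
  have hay : G.Adj (ℓ.symm ⟨j-1, haylt⟩) y := adj_consec_s10 hℓ hconn (by simp [← hjdef]; try omega)
  have hyb : G.Adj y (ℓ.symm ⟨j+1, hbylt⟩) := adj_consec_s10 hℓ hconn (by simp [← hjdef]; try omega)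
  have hloj : lo.val ≤ j - 1 := by
    have : (⟨j-1, haylt⟩ : Fin n) ∈ F := by
      have := (memF (ℓ.symm ⟨j-1, haylt⟩)).2 (Or.inr hay.symm)
      simpa using this
    exact F.min'_le _ this
  have hhij : j + 1 ≤ hi.val := by
    have : (⟨j+1, hbylt⟩ : Fin n) ∈ F := by
      have := (memF (ℓ.symm ⟨j+1, hbylt⟩)).2 (Or.inr hyb)
      simpa using this
    exact F.le_max' _ this
  have hloy : lo.val ≤ j := F.min'_le _ hyF
  have hhiy : j ≤ hi.val := F.le_max' _ hyF
  have hcF : ℓ c ∈ F := by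
    have : lo ∈ F := F.min'_mem hFne
    simpa [hcdef] using this
  have hdF : ℓ d ∈ F := by
    have : hi ∈ F := F.max'_mem hFne
    simpa [hddef] using this
  have hcy : c ≠ y := fun hh => by rw [hh] at hlc; omega
  have hdy : d ≠ y := fun hh => by rw [hh] at hld; omega
  have hyc : G.Adj y c := ((memF c).1 hcF).resolve_left hcy
  have hyd : G.Adj y d := ((memF d).1 hdF).resolve_left hdy
  -- interval property of F
  have betweenF : ∀ z : V, lo.val ≤ (ℓ z).val → (ℓ z).val ≤ hi.val → ℓ z ∈ F := by
    intro z hzlo hzhi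
    rcases lt_trichotomy (ℓ z).val j with hzj | hzj | hzj
    · rcases eq_or_lt_of_le hzlo with heq | hlt
      · have : ℓ z = ℓ c := Fin.ext (by omega)
        rw [this]; exact hcF
      · refine (memF z).2 (Or.inr ?_)
        refine ((adj_between hℓ hconn n hyc.symm ?_ ?_ ?_).2).symm
        · omega
        · rw [Fin.lt_def]; omega
        · rw [Fin.lt_def]; omega
    · have : z = y := ℓ.injective (Fin.ext (by omega))
      exact (memF z).2 (Or.inl this)
    · rcases eq_or_lt_of_le hzhi with heq | hlt
      · have : ℓ z = ℓ d := Fin.ext (by omega)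
        rw [this]; exact hdF
      · refine (memF z).2 (Or.inr ?_)
        have hhin := hi.isLt
        refine (adj_between hℓ hconn n hyd ?_ ?_ ?_).1
        · omega
        · rw [Fin.lt_def]; omega
        · rw [Fin.lt_def]; omega
  -- extra neighbors of c lie strictly below lo
  have extraC : ∀ z : V, G.Adj c z → ℓ z ∉ F → (ℓ z).val < lo.val := by
    intro z hcz hzF
    by_contra hge
    push_neg at hge
    have hzhi : hi.val < (ℓ z).val := by
      by_contra hh
      push_neg at hh
      exact hzF (betweenF z hge hh)
    have hzn := (ℓ z).isLt
    have : G.Adj y z := (adj_between hℓ hconn n hcz (by omega)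
      (by rw [Fin.lt_def]; omega) (by rw [Fin.lt_def]; omega)).2
    exact hzF ((memF z).2 (Or.inr this))
  have extraD : ∀ z : V, G.Adj d z → ℓ z ∉ F → hi.val < (ℓ z).val := by
    intro z hdz hzF
    by_contra hge
    push_neg at hge
    have hzlo : (ℓ z).val < lo.val := by
      by_contra hh
      push_neg at hh
      exact hzF (betweenF z hh hge)
    have hdn := hi.isLt
    have : G.Adj z y := (adj_between hℓ hconn n hdz.symm (by omega)
      (by rw [Fin.lt_def]; omega) (by rw [Fin.lt_def]; omega)).1
    exact hzF ((memF z).2 (Or.inr this.symm))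
  have existsC : ∃ z : V, G.Adj c z ∧ (ℓ z).val < lo.val := by
    by_contra hno
    push_neg at hno
    have hfull : fullNbhd G c = fullNbhd G y := by
      ext z
      rw [mem_fullNbhd, mem_fullNbhd]
      constructor
      · rintro (rfl | hcz)
        · exact Or.inr hyc
        · by_cases hzF : ℓ z ∈ F
          · exact (memF z).1 hzF
          · exact absurd (extraC z hcz hzF) (not_lt.2 (hno z hcz))
      · rintro (rfl | hyz)
        · exact Or.inr hyc.symm
        · by_cases hzc : z = c
          · exact Or.inl hzc
          · exact Or.inr (cliqueN c z hyc hyz (fun hh => hzc hh.symm))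
    have := hcol c y hfull
    rw [this] at hlc
    omega
  have existsD : ∃ z : V, G.Adj d z ∧ hi.val < (ℓ z).val := by
    by_contra hno
    push_neg at hno
    have hfull : fullNbhd G d = fullNbhd G y := by
      ext z
      rw [mem_fullNbhd, mem_fullNbhd]
      constructor
      · rintro (rfl | hdz)
        · exact Or.inr hyd
        · by_cases hzF : ℓ z ∈ F
          · exact (memF z).1 hzF
          · exact absurd (extraD z hdz hzF) (not_lt.2 (hno z hdz))
      · rintro (rfl | hyz)
        · exact Or.inr hyd.symm
        · by_cases hzd : z = d
          · exact Or.inl hzd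
          · exact Or.inr (cliqueN d z hyd hyz (fun hh => hzd hh.symm))
    have := hcol d y hfull
    rw [this] at hld
    omega
  obtain ⟨zc, hczc, hzclo⟩ := existsC
  obtain ⟨zd, hdzd, hzdhi⟩ := existsD
  have hzcF : ℓ zc ∉ F := fun hh => by
    have := F.min'_le _ hh
    rw [← hlodef, Fin.le_def] at this
    omega
  have hzdF : ℓ zd ∉ F := fun hh => by
    have := F.le_max' _ hh
    rw [← hhidef, Fin.le_def] at this
    omega
  -- the m-labels of F form an initial segment
  set Fm := F.image (fun t => (m (ℓ.symm t)).val) with hFmdef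
  have hFmne : Fm.Nonempty := hFne.image _
  set mF := Fm.max' hFmne with hmFdef
  obtain ⟨te, hteF, hte⟩ := Finset.mem_image.1 (Fm.max'_mem hFmne)
  set e := ℓ.symm te with hedef
  have hmemFm : ∀ z : V, ℓ z ∈ F → (m z).val ≤ mF := by
    intro z hz
    refine Fm.le_max' _ ?_
    exact Finset.mem_image.2 ⟨ℓ z, hz, by simp⟩
  have heF : ℓ e ∈ F := by simpa [hedef] using hteF
  have hme : (m e).val = mF := by rw [hedef]; exact hte
  have hbmem : ℓ (ℓ.symm ⟨j+1, hbylt⟩) ∈ F := (memF _).2 (Or.inr hyb)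
  have hbney : ℓ.symm ⟨j+1, hbylt⟩ ≠ y := fun hh => by
    have : ((⟨j+1, hbylt⟩ : Fin n)).val = j := by
      conv_lhs => rw [show (⟨j+1, hbylt⟩ : Fin n) = ℓ (ℓ.symm ⟨j+1, hbylt⟩) by simp, hh]
    simp at this
  have hbpos : 0 < (m (ℓ.symm ⟨j+1, hbylt⟩)).val :=
    Nat.pos_of_ne_zero (fun hh => hbney (m.injective (Fin.ext (by rw [hh, hmy]))))
  have hmFpos : 0 < mF := lt_of_lt_of_le hbpos (hmemFm _ hbmem)
  have hey : e ≠ y := fun hh => by rw [hh, hmy] at hme; omega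
  have hye : G.Adj y e := ((memF e).1 heF).resolve_left hey
  have hmchar : ∀ z : V, ℓ z ∈ F ↔ (m z).val ≤ mF := by
    intro z
    refine ⟨hmemFm z, fun hz => ?_⟩
    rcases Nat.eq_zero_or_pos (m z).val with h0' | hpos
    · have : z = y := m.injective (Fin.ext (by rw [hmy, h0']))
      rw [this]; exact hyF
    · rcases eq_or_lt_of_le hz with heq | hlt
      · have : z = e := m.injective (Fin.ext (by rw [heq, hme]))
        rw [this]; exact heF
      · have hen := (m e).isLt
        refine (memF z).2 (Or.inr ?_)
        exact (adj_between hm hconn n hye (by omega)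
          (by rw [Fin.lt_def]; omega) (by rw [Fin.lt_def]; omega)).1
  have hmzc : mF < (m zc).val := lt_of_not_ge fun hh => hzcF ((hmchar zc).2 hh)
  have hmzd : mF < (m zd).val := lt_of_not_ge fun hh => hzdF ((hmchar zd).2 hh)
  -- discrete IVT to find a consecutive crossing pair
  set g : ℕ → ℕ := fun t => if ht : t < n then (ℓ (m.symm ⟨t, ht⟩)).val else 0 with hgdef
  have hg : ∀ (t : ℕ) (ht : t < n), g t = (ℓ (m.symm ⟨t, ht⟩)).val := fun t ht => dif_pos ht
  have hPzc : g (m zc).val < lo.val := by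
    rw [hg _ (m zc).isLt, show m.symm ⟨(m zc).val, (m zc).isLt⟩ = zc by simp]
    exact hzclo
  have hPzd : ¬ (g (m zd).val < lo.val) := by
    rw [hg _ (m zd).isLt, show m.symm ⟨(m zd).val, (m zd).isLt⟩ = zd by simp]
    omega
  have final : ∀ (t1 t2 : ℕ), t1 < n → t2 < n → (t2 = t1 + 1 ∨ t1 = t2 + 1) →
      mF < t2 → g t1 < lo.val → ¬ (g t2 < lo.val) → False := by
    intro t1 t2 h1 h2 ht12 hmt hu1 hu2
    rw [hg t1 h1] at hu1
    rw [hg t2 h2] at hu2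
    set u1 := m.symm ⟨t1, h1⟩ with hu1def
    set u2 := m.symm ⟨t2, h2⟩ with hu2def
    have hadj : G.Adj u1 u2 := by
      rcases ht12 with hh | hh
      · exact adj_consec_s10 hm hconn (by simp [hu1def, hu2def, hh])
      · exact (adj_consec_s10 hm hconn (by simp [hu1def, hu2def, hh])).symm
    have hu2F : ℓ u2 ∉ F := fun hh => by
      have h' := hmemFm u2 hh
      have h'' : (m u2).val = t2 := by rw [hu2def]; simp
      omega
    have hu2hi : hi.val < (ℓ u2).val := by
      by_contra hh
      push_neg at hh
      exact hu2F (betweenF u2 (by omega) hh)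
    have hu2n := (ℓ u2).isLt
    have hadjy : G.Adj u1 y := (adj_between hℓ hconn n hadj (by omega)
      (by rw [Fin.lt_def]; omega) (by rw [Fin.lt_def]; omega)).1
    have hF1 : ℓ u1 ∈ F := (memF u1).2 (Or.inr hadjy.symm)
    have h''' := F.min'_le _ hF1
    rw [← hlodef, Fin.le_def] at h'''
    omega
  rcases lt_trichotomy (m zc).val (m zd).val with hlt' | heq' | hlt'
  · obtain ⟨t, ht1, ht2, hPt, hPt1⟩ :=
      nat_ivt (fun t => g t < lo.val) (m zd).val (m zc).val hlt'.le hPzc hPzd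
    have h2 : t + 1 < n := by have := (m zd).isLt; omega
    have h1 : t < n := by omega
    exact final t (t+1) h1 h2 (Or.inl rfl) (by omega) hPt hPt1
  · have : zc = zd := m.injective (Fin.ext heq')
    rw [this] at hzclo
    omega
  · obtain ⟨t, ht1, ht2, hPt, hPt1⟩ :=
      nat_ivt (fun t => ¬ (g t < lo.val)) (m zc).val (m zd).val hlt'.le hPzd
        (not_not_intro hPzc)
    have h2 : t + 1 < n := by have := (m zc).isLt; omega
    have h1 : t < n := by omega
    exact final (t+1) t h2 h1 (Or.inr rfl) (by omega) (not_not.1 hPt1) hPt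

lemma cycleRange_val {N : ℕ} (k x : Fin N) :
    ((k.cycleRange x) : ℕ) =
      if x = k then 0 else if x.val < k.val then x.val + 1 else x.val := by
  cases N with
  | zero => exact k.elim0
  | succ N =>
    rcases lt_trichotomy x k with h | h | h
    · rw [Fin.cycleRange_of_lt h, if_neg h.ne, if_pos (Fin.lt_def.1 h),
        Fin.val_add_one_of_lt (lt_of_lt_of_le h (Fin.le_last k))]
    · rw [h, Fin.cycleRange_self, if_pos rfl]
      rfl
    · rw [Fin.cycleRange_of_gt h, if_neg h.ne',
        if_neg (by have := Fin.lt_def.1 h; omega)]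

lemma rev_ne (h3 : 3 ≤ n) (ℓ' : V ≃ Fin n) : ℓ' ≠ ℓ'.trans Fin.revPerm := by
  intro h
  have hn : 0 < n := by omega
  have h1 := congrArg Fin.val (DFunLike.congr_fun h (ℓ'.symm ⟨0, hn⟩))
  rw [Equiv.trans_apply, Fin.revPerm_apply, Fin.val_rev, Equiv.apply_symm_apply] at h1
  have h2 : ((⟨0, hn⟩ : Fin n)).val = 0 := rfl
  omega

lemma not_connected_three [Fintype V]
    (hℓ : ClosedLabelingOf G ℓ) (h3 : 3 ≤ n) (hnc : ¬ G.Connected) :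
    ∃ L1 L2 L3 : V ≃ Fin n, ClosedLabelingOf G L1 ∧ ClosedLabelingOf G L2 ∧
      ClosedLabelingOf G L3 ∧ L1 ≠ L2 ∧ L1 ≠ L3 ∧ L2 ≠ L3 := by
  classical
  have hn : 0 < n := by omega
  set v0 := ℓ.symm ⟨0, hn⟩ with hv0def
  have hnp : ¬ G.Preconnected := fun hp => hnc { preconnected := hp, nonempty := ⟨v0⟩ }
  have hex : ∃ w : V, ¬ G.Reachable v0 w := by
    rw [SimpleGraph.Preconnected] at hnp
    push_neg at hnp
    obtain ⟨a, b, hab⟩ := hnp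
    by_cases hva : G.Reachable v0 a
    · exact ⟨b, fun hvb => hab (hva.symm.trans hvb)⟩
    · exact ⟨a, hva⟩
  obtain ⟨w0, hw0⟩ := hex
  set S : Finset V := Finset.univ.filter (fun z => ¬ G.Reachable v0 z) with hSdef
  have hSne : S.Nonempty := ⟨w0, by simp [hSdef, hw0]⟩
  obtain ⟨u, huS, humin⟩ := S.exists_min_image (fun z => (ℓ z).val) hSne
  have huR : ¬ G.Reachable v0 u := by
    have h' := huS
    rw [hSdef, Finset.mem_filter] at h'
    exact h'.2
  have hk0 : (ℓ u).val ≠ 0 := by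
    intro hh
    have huv : u = v0 := by
      rw [hv0def]
      apply_fun ℓ
      · rw [Equiv.apply_symm_apply]
        exact Fin.ext hh
    exact huR (huv ▸ SimpleGraph.Reachable.refl u)
  set k := ℓ u with hkdef
  have h0 : (ℓ v0).val = 0 := by rw [hv0def]; simp
  have hcyc : ∀ z : V, ((ℓ.trans (Fin.cycleRange k)) z).val =
      if ℓ z = k then 0 else if (ℓ z).val < k.val then (ℓ z).val + 1 else (ℓ z).val := by
    intro z
    rw [Equiv.trans_apply]
    exact cycleRange_val k (ℓ z)
  have hmono : ∀ a b : V, G.Reachable a b →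
      (ℓ a < ℓ b ↔ (ℓ.trans (Fin.cycleRange k)) a < (ℓ.trans (Fin.cycleRange k)) b) := by
    intro a b hr
    rw [Fin.lt_def, Fin.lt_def, hcyc a, hcyc b]
    by_cases hak : ℓ a = k <;> by_cases hbk : ℓ b = k
    · rw [if_pos hak, if_pos hbk, hak, hbk]
      omega
    · -- a = u
      have hau : a = u := ℓ.injective (hak.trans hkdef)
      have hbS : b ∈ S := by
        rw [hSdef, Finset.mem_filter]
        exact ⟨Finset.mem_univ _, fun hvb => huR (hau ▸ (hvb.trans hr.symm))⟩
      have hble : (ℓ u).val ≤ (ℓ b).val := humin b hbS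
      have hbne : (ℓ b).val ≠ k.val := fun hh => hbk (Fin.ext hh)
      rw [if_pos hak, if_neg hbk, if_neg (by rw [hkdef] at hbne ⊢; omega)]
      rw [hak]
      rw [hkdef] at hbne ⊢
      omega
    · have hbu : b = u := ℓ.injective (hbk.trans hkdef)
      have haS : a ∈ S := by
        rw [hSdef, Finset.mem_filter]
        exact ⟨Finset.mem_univ _, fun hva => huR (hbu ▸ (hva.trans hr))⟩
      have hale : (ℓ u).val ≤ (ℓ a).val := humin a haS
      have hane : (ℓ a).val ≠ k.val := fun hh => hak (Fin.ext hh)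
      rw [if_neg hak, if_pos hbk, if_neg (by rw [hkdef] at hane ⊢; omega)]
      rw [hbk]
      rw [hkdef] at hane ⊢
      omega
    · have hane : (ℓ a).val ≠ k.val := fun hh => hak (Fin.ext hh)
      have hbne : (ℓ b).val ≠ k.val := fun hh => hbk (Fin.ext hh)
      rw [if_neg hak, if_neg hbk]
      split_ifs <;> omega
  have hL3 : ClosedLabelingOf G (ℓ.trans (Fin.cycleRange k)) :=
    closed_of_mono_reachable hℓ hmono
  refine ⟨ℓ, ℓ.trans Fin.revPerm, ℓ.trans (Fin.cycleRange k), hℓ, closed_rev hℓ, hL3,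
    rev_ne h3 ℓ, ?_, ?_⟩
  · intro h
    have h1 := congrArg Fin.val (DFunLike.congr_fun h u)
    rw [hcyc u, if_pos hkdef.symm] at h1
    exact hk0 h1
  · intro h
    have h1 := congrArg Fin.val (DFunLike.congr_fun h v0)
    rw [Equiv.trans_apply, Fin.revPerm_apply, Fin.val_rev, hcyc v0,
      if_neg (fun hh => hk0 (by rw [hkdef] at hh ⊢; rw [← hh, h0])),
      if_pos (by omega)] at h1
    omega

lemma not_collapsed_three [Fintype V]
    (hℓ : ClosedLabelingOf G ℓ) (h3 : 3 ≤ n) (hncol : ¬ Collapsed G) :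
    ∃ L1 L2 L3 : V ≃ Fin n, ClosedLabelingOf G L1 ∧ ClosedLabelingOf G L2 ∧
      ClosedLabelingOf G L3 ∧ L1 ≠ L2 ∧ L1 ≠ L3 ∧ L2 ≠ L3 := by
  classical
  unfold Collapsed at hncol
  push_neg at hncol
  obtain ⟨v, w, hfull, hvw⟩ := hncol
  have hadjvw : G.Adj v w := by
    have hv : v ∈ fullNbhd G v := by rw [mem_fullNbhd]; left; rfl
    rw [hfull, mem_fullNbhd] at hv
    exact (hv.resolve_left hvw).symm
  have hsame : ∀ t : V, t ≠ v → t ≠ w → (G.Adj v t ↔ G.Adj w t) := by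
    intro t htv htw
    have ht := Set.ext_iff.1 hfull t
    rw [mem_fullNbhd, mem_fullNbhd] at ht
    constructor
    · intro h; exact (ht.1 (Or.inr h)).resolve_left htw
    · intro h; exact (ht.2 (Or.inr h)).resolve_left htv
  have haut1 : ∀ a b : V, G.Adj a b → G.Adj (Equiv.swap v w a) (Equiv.swap v w b) := by
    intro a b hab
    by_cases hav : a = v
    · rw [hav] at hab ⊢
      rw [Equiv.swap_apply_left]
      by_cases hbw : b = w
      · rw [hbw, Equiv.swap_apply_right]; exact hadjvw.symm
      · have hbv : b ≠ v := fun hh => hab.ne hh.symm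
        rw [Equiv.swap_apply_of_ne_of_ne hbv hbw]
        exact (hsame b hbv hbw).1 hab
    · by_cases haw : a = w
      · rw [haw] at hab ⊢
        rw [Equiv.swap_apply_right]
        by_cases hbv : b = v
        · rw [hbv, Equiv.swap_apply_left]; exact hadjvw
        · have hbw : b ≠ w := fun hh => hab.ne hh.symm
          rw [Equiv.swap_apply_of_ne_of_ne hbv hbw]
          exact (hsame b hbv hbw).2 hab
      · rw [Equiv.swap_apply_of_ne_of_ne hav haw]
        by_cases hbv : b = v
        · rw [hbv] at hab ⊢
          rw [Equiv.swap_apply_left]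
          exact ((hsame a hav haw).1 hab.symm).symm
        · by_cases hbw : b = w
          · rw [hbw] at hab ⊢
            rw [Equiv.swap_apply_right]
            exact ((hsame a hav haw).2 hab.symm).symm
          · rw [Equiv.swap_apply_of_ne_of_ne hbv hbw]; exact hab
  have haut : ∀ a b : V, G.Adj (Equiv.swap v w a) (Equiv.swap v w b) ↔ G.Adj a b := by
    intro a b
    constructor
    · intro h
      have := haut1 _ _ h
      simpa [Equiv.swap_apply_self] using this
    · exact haut1 a b
  have hL2 : ClosedLabelingOf G ((Equiv.swap v w).trans ℓ) := closed_comp_aut hℓ _ haut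
  have hn : 0 < n := by omega
  have hne12 : ℓ ≠ (Equiv.swap v w).trans ℓ := by
    intro h
    have := DFunLike.congr_fun h v
    rw [Equiv.trans_apply, Equiv.swap_apply_left] at this
    exact hvw (ℓ.injective this)
  by_cases hL : (Equiv.swap v w).trans ℓ = ℓ.trans Fin.revPerm
  · -- collision case : n = 3 and every labeling is closed
    have hcol3 : ∀ a : V, a ≠ v → a ≠ w → 2 * (ℓ a).val = n - 1 := by
      intro a hav haw
      have h1 := congrArg Fin.val (DFunLike.congr_fun hL a)
      rw [Equiv.trans_apply, Equiv.swap_apply_of_ne_of_ne hav haw, Equiv.trans_apply,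
        Fin.revPerm_apply, Fin.val_rev] at h1
      have := (ℓ a).isLt
      omega
    have hcard : Fintype.card V = n := by
      rw [← Fintype.card_fin n]; exact Fintype.card_congr ℓ
    set T : Finset V := (Finset.univ \ {v, w} : Finset V) with hTdef
    have hmemT : ∀ a : V, a ∈ T ↔ (a ≠ v ∧ a ≠ w) := by
      intro a
      simp only [hTdef, Finset.mem_sdiff, Finset.mem_univ, true_and, Finset.mem_insert,
        Finset.mem_singleton, not_or]
    have hTcard : T.card = n - 2 := by
      rw [hTdef, Finset.card_sdiff_of_subset (Finset.subset_univ _), Finset.card_univ, hcard,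
        Finset.card_pair hvw]
    have hn3 : n = 3 := by
      by_contra hne3
      have h2le : 2 ≤ T.card := by omega
      obtain ⟨a1, ha1, a2, ha2, ha12⟩ := Finset.one_lt_card.1 (show 1 < T.card by omega)
      have e1 := hcol3 a1 ((hmemT a1).1 ha1).1 ((hmemT a1).1 ha1).2
      have e2 := hcol3 a2 ((hmemT a2).1 ha2).1 ((hmemT a2).1 ha2).2
      exact ha12 (ℓ.injective (Fin.ext (by omega)))
    have hT1 : T.card = 1 := by omega
    obtain ⟨u0, hu0⟩ := Finset.card_eq_one.1 hT1
    have hu0vw : u0 ≠ v ∧ u0 ≠ w := (hmemT u0).1 (hu0 ▸ Finset.mem_singleton_self u0)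
    have hall : ∀ z : V, z = u0 ∨ z = v ∨ z = w := by
      intro z
      by_cases hzv : z = v
      · exact Or.inr (Or.inl hzv)
      by_cases hzw : z = w
      · exact Or.inr (Or.inr hzw)
      left
      have : z ∈ T := (hmemT z).2 ⟨hzv, hzw⟩
      rw [hu0] at this
      exact Finset.mem_singleton.1 this
    have hLC : ∀ a b c : V, G.Adj a b → G.Adj a c → b ≠ c → G.Adj b c := by
      by_cases huv : G.Adj v u0
      · have huw : G.Adj w u0 := (hsame u0 hu0vw.1 hu0vw.2).1 huv
        have hcomp : ∀ x z : V, x ≠ z → G.Adj x z := by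
          intro x z hxz
          rcases hall x with rfl | rfl | rfl <;> rcases hall z with rfl | rfl | rfl
          · exact absurd rfl hxz
          · exact huv.symm
          · exact huw.symm
          · exact huv
          · exact absurd rfl hxz
          · exact hadjvw
          · exact huw
          · exact hadjvw.symm
          · exact absurd rfl hxz
        exact fun a b c _ _ hbc => hcomp b c hbc
      · have huw : ¬ G.Adj w u0 := fun h => huv ((hsame u0 hu0vw.1 hu0vw.2).2 h)
        intro a b c hab hac hbc
        exfalso
        have honly : ∀ z : V, G.Adj a z → (a = v ∧ z = w) ∨ (a = w ∧ z = v) := by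
          intro z hz
          rcases hall a with rfl | rfl | rfl
          · rcases hall z with rfl | rfl | rfl
            · exact absurd rfl hz.ne
            · exact absurd hz.symm huv
            · exact absurd hz.symm huw
          · rcases hall z with rfl | rfl | rfl
            · exact absurd hz huv
            · exact absurd rfl hz.ne
            · exact Or.inl ⟨rfl, rfl⟩
          · rcases hall z with rfl | rfl | rfl
            · exact absurd hz huw
            · exact Or.inr ⟨rfl, rfl⟩
            · exact absurd rfl hz.ne
        rcases honly b hab with ⟨hav, hbw⟩ | ⟨haw, hbv⟩ <;>
          rcases honly c hac with ⟨hav2, hcw⟩ | ⟨haw2, hcv⟩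
        · exact hbc (hbw.trans hcw.symm)
        · exact hvw (hav.symm.trans haw2)
        · exact hvw (hav2.symm.trans haw)
        · exact hbc (hbv.trans hcv.symm)
    have hallclosed : ∀ L : V ≃ Fin n, ClosedLabelingOf G L :=
      fun L u' v' w' h1 h2 h3' _ => hLC v' u' w' h1 h2 h3'
    refine ⟨ℓ, (Equiv.swap v w).trans ℓ, (Equiv.swap v u0).trans ℓ, hℓ, hL2,
      hallclosed _, hne12, ?_, ?_⟩
    · intro h
      have := DFunLike.congr_fun h v
      rw [Equiv.trans_apply, Equiv.swap_apply_left] at this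
      exact hu0vw.1 (ℓ.injective this).symm
    · intro h
      have := DFunLike.congr_fun h w
      rw [Equiv.trans_apply, Equiv.trans_apply, Equiv.swap_apply_right,
        Equiv.swap_apply_of_ne_of_ne (Ne.symm hvw) (Ne.symm hu0vw.2)] at this
      exact hvw (ℓ.injective this)
  · exact ⟨ℓ, (Equiv.swap v w).trans ℓ, ℓ.trans Fin.revPerm, hℓ, hL2, closed_rev hℓ,
      hne12, rev_ne h3 ℓ, hL⟩

end Aux

theorem two_closed_labelings_iff_collapsed {V : Type*} [Fintype V]
    (G : SimpleGraph V)
    (hclosed : ∃ ℓ : V ≃ Fin (Fintype.card V), ClosedLabelingOf G ℓ)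
    (hcard : 3 ≤ Fintype.card V) :
    {ℓ : V ≃ Fin (Fintype.card V) | ClosedLabelingOf G ℓ}.ncard = 2 ↔
      G.Connected ∧ Collapsed G := by
  classical
  obtain ⟨ℓ0, hℓ0⟩ := hclosed
  have hn : 0 < Fintype.card V := by omega
  constructor
  · intro h2
    by_contra hno
    have h3l : ∃ L1 L2 L3 : V ≃ Fin (Fintype.card V), ClosedLabelingOf G L1 ∧
        ClosedLabelingOf G L2 ∧ ClosedLabelingOf G L3 ∧ L1 ≠ L2 ∧ L1 ≠ L3 ∧ L2 ≠ L3 := by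
      by_cases hc : G.Connected
      · have hcol : ¬ Collapsed G := fun hcol => hno ⟨hc, hcol⟩
        exact not_collapsed_three hℓ0 hcard hcol
      · exact not_connected_three hℓ0 hcard hc
    obtain ⟨L1, L2, L3, hL1, hL2, hL3, h12, h13, h23⟩ := h3l
    have hsub : ({L1, L2, L3} : Set (V ≃ Fin (Fintype.card V))) ⊆
        {ℓ : V ≃ Fin (Fintype.card V) | ClosedLabelingOf G ℓ} := by
      rintro x (rfl | rfl | rfl) <;> assumption
    have hfin : ({ℓ : V ≃ Fin (Fintype.card V) | ClosedLabelingOf G ℓ}).Finite :=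
      Set.toFinite _
    have h3c : ({L1, L2, L3} : Set (V ≃ Fin (Fintype.card V))).ncard = 3 := by
      rw [Set.ncard_insert_of_notMem (by simp [h12, h13]), Set.ncard_pair h23]
    have hle := Set.ncard_le_ncard hsub hfin
    omega
  · rintro ⟨hconn, hcol⟩
    have hne : ℓ0 ≠ ℓ0.trans Fin.revPerm := rev_ne hcard ℓ0
    have hset : {ℓ : V ≃ Fin (Fintype.card V) | ClosedLabelingOf G ℓ} =
        {ℓ0, ℓ0.trans Fin.revPerm} := by
      ext m
      simp only [Set.mem_setOf_eq, Set.mem_insert_iff, Set.mem_singleton_iff]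
      constructor
      · intro hm
        rcases symm_zero_extremal hℓ0 hm hconn.preconnected hcol hn with h | h
        · left
          refine (eq_of_symm_zero_eq hℓ0 hm hconn.preconnected hcol hn ?_).symm
          have h1 : ℓ0 (m.symm ⟨0, hn⟩) = ⟨0, hn⟩ := Fin.ext h
          calc ℓ0.symm ⟨0, hn⟩ = ℓ0.symm (ℓ0 (m.symm ⟨0, hn⟩)) := by rw [h1]
            _ = m.symm ⟨0, hn⟩ := ℓ0.symm_apply_apply _
        · right
          refine (eq_of_symm_zero_eq (closed_rev hℓ0) hm hconn.preconnected hcol hn ?_).symm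
          have h1 : (ℓ0.trans Fin.revPerm) (m.symm ⟨0, hn⟩) = ⟨0, hn⟩ := by
            apply Fin.ext
            rw [Equiv.trans_apply, Fin.revPerm_apply, Fin.val_rev, h]
            have h2 : ((⟨0, hn⟩ : Fin (Fintype.card V))).val = 0 := rfl
            omega
          calc (ℓ0.trans Fin.revPerm).symm ⟨0, hn⟩
              = (ℓ0.trans Fin.revPerm).symm ((ℓ0.trans Fin.revPerm) (m.symm ⟨0, hn⟩)) := by
                rw [h1]
            _ = m.symm ⟨0, hn⟩ := Equiv.symm_apply_apply _ _
      · rintro (rfl | rfl)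
        · exact hℓ0
        · exact closed_rev hℓ0
    rw [hset, Set.ncard_pair hne]
end

section
/- Let G be connected with a closed labeling, with exchangeability equivalence classes E_1 < E_2 < ... < E_r (ordered as intervals). If r > 1, then r ≥ 3. -/
/-- The set of exchangeability equivalence classes. -/
def exchClasses {n : ℕ} (G : SimpleGraph (Fin n)) : Set (Set (Fin n)) :=
  {S | ∃ v : Fin n, S = {w : Fin n | fullNbhd G w = fullNbhd G v}}

lemma self_mem_fullNbhd {V : Type*} (G : SimpleGraph V) (v : V) : v ∈ fullNbhd G v := by
  simp [fullNbhd]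

lemma adj_mem_fullNbhd {V : Type*} {G : SimpleGraph V} {u v : V} (h : G.Adj u v) :
    v ∈ fullNbhd G u := by
  simp [fullNbhd, h]

lemma fullNbhd_comm {V : Type*} (G : SimpleGraph V) (u v : V) :
    u ∈ fullNbhd G v ↔ v ∈ fullNbhd G u := by
  simp only [fullNbhd, Set.mem_union, Set.mem_singleton_iff, SimpleGraph.mem_neighborSet]
  constructor
  · rintro (h | h)
    · exact Or.inl h.symm
    · exact Or.inr h.symm
  · rintro (h | h)
    · exact Or.inl h.symm
    · exact Or.inr h.symm

lemma walk_adj_ne {n : ℕ} (G : SimpleGraph (Fin n)) :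
    ∀ {v w : Fin n}, G.Walk v w → fullNbhd G v ≠ fullNbhd G w →
      ∃ a b, G.Adj a b ∧ fullNbhd G a ≠ fullNbhd G b := by
  intro v w p
  induction p with
  | nil => intro h; exact absurd rfl h
  | @cons x y z h p ih =>
    intro hne
    by_cases hc : fullNbhd G x = fullNbhd G y
    · exact ih (fun h' => hne (hc.trans h'))
    · exact ⟨x, y, h, hc⟩

theorem classes_three_of_gt_one {n : ℕ} (G : SimpleGraph (Fin n))
    (hconn : G.Connected) (hG : IsClosedLabeling G)
    (hr : 1 < (exchClasses G).ncard) :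
    3 ≤ (exchClasses G).ncard := by
  by_contra h3
  have h2 : (exchClasses G).ncard = 2 := by omega
  obtain ⟨S, T, hST, hU⟩ := Set.ncard_eq_two.mp h2
  have hS : S ∈ exchClasses G := by rw [hU]; simp
  have hT : T ∈ exchClasses G := by rw [hU]; simp
  obtain ⟨v, rfl⟩ := hS
  obtain ⟨w, rfl⟩ := hT
  have hvw : fullNbhd G v ≠ fullNbhd G w := by
    intro h; exact hST (by rw [h])
  obtain ⟨a, b, hab, hNab⟩ := walk_adj_ne G ((hconn.preconnected v w).some) hvw
  have hclass : ∀ u : Fin n, fullNbhd G u = fullNbhd G a ∨ fullNbhd G u = fullNbhd G b := by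
    intro u
    have hCu : {x : Fin n | fullNbhd G x = fullNbhd G u} ∈ exchClasses G := ⟨u, rfl⟩
    have hCa : {x : Fin n | fullNbhd G x = fullNbhd G a} ∈ exchClasses G := ⟨a, rfl⟩
    have hCb : {x : Fin n | fullNbhd G x = fullNbhd G b} ∈ exchClasses G := ⟨b, rfl⟩
    rw [hU] at hCu hCa hCb
    have hCab : ({x : Fin n | fullNbhd G x = fullNbhd G a} : Set (Fin n)) ≠
        {x : Fin n | fullNbhd G x = fullNbhd G b} := by
      intro h
      have ha : a ∈ {x : Fin n | fullNbhd G x = fullNbhd G a} := rfl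
      rw [h] at ha
      exact hNab ha
    have key : ∀ c : Fin n, {x : Fin n | fullNbhd G x = fullNbhd G u} =
        {x : Fin n | fullNbhd G x = fullNbhd G c} → fullNbhd G u = fullNbhd G c := by
      intro c hc
      have : u ∈ {x : Fin n | fullNbhd G x = fullNbhd G u} := rfl
      rw [hc] at this
      exact this
    rcases hCu with hu | hu <;> rcases hCa with ha | ha <;> rcases hCb with hb | hb <;>
      first
      | exact absurd (ha.trans hb.symm) hCab
      | exact Or.inl (key a (hu.trans ha.symm))
      | exact Or.inr (key b (hu.trans hb.symm))
  have ha_univ : fullNbhd G a = Set.univ := by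
    apply Set.eq_univ_of_forall
    intro u
    rcases hclass u with hu | hu
    · rw [← hu]; exact self_mem_fullNbhd G u
    · have : a ∈ fullNbhd G u := by rw [hu]; exact adj_mem_fullNbhd hab.symm
      exact (fullNbhd_comm G u a).mpr this
  have hb_univ : fullNbhd G b = Set.univ := by
    apply Set.eq_univ_of_forall
    intro u
    rcases hclass u with hu | hu
    · have : b ∈ fullNbhd G u := by rw [hu]; exact adj_mem_fullNbhd hab
      exact (fullNbhd_comm G u b).mpr this
    · rw [← hu]; exact self_mem_fullNbhd G u
  exact hNab (ha_univ.trans hb_univ.symm)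
end

section
/- Let G be connected with a closed labeling, with layers L_0,...,L_h. Let u_s be the s-th smallest vertex of L_N, let m_{N+1} = min(L_{N+1}), and let b_s be the number of edges from u_s to L_{N+1}. If b_s > 0, then {v ∈ L_{N+1} : {u_s, v} ∈ E(G)} = [m_{N+1}, m_{N+1} + b_s - 1]. -/
section Aux

variable {n : ℕ} {G : SimpleGraph (Fin (n + 1))}

/-- On a shortest walk, if the first step goes down, the endpoint is below. -/
lemma aux_down (hG : IsClosedLabeling G) :
    ∀ {r b : Fin (n + 1)} (q : G.Walk r b) {v : Fin (n + 1)},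
      G.Adj v r → q.length + 1 = G.dist v b → r < v → b ≤ r := by
  intro r b q
  induction q with
  | nil => intro v _ _ _; exact le_rfl
  | @cons r s b h' q'' ih =>
    intro v hvr hlen hrv
    rw [SimpleGraph.Walk.length_cons] at hlen
    have hds : G.dist s b ≤ q''.length := SimpleGraph.dist_le q''
    obtain ⟨ps, hps⟩ := q''.reachable.exists_walk_length_eq_dist
    have hdr1 : G.dist r b ≤ G.dist s b + 1 := by
      have := SimpleGraph.dist_le (SimpleGraph.Walk.cons h' ps)
      rw [SimpleGraph.Walk.length_cons, hps] at this
      exact this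
    obtain ⟨pr, hpr⟩ := (SimpleGraph.Walk.cons h' q'').reachable.exists_walk_length_eq_dist
    have hdv1 : G.dist v b ≤ G.dist r b + 1 := by
      have := SimpleGraph.dist_le (SimpleGraph.Walk.cons hvr pr)
      rw [SimpleGraph.Walk.length_cons, hpr] at this
      exact this
    have hdr : G.dist r b = q''.length + 1 := by omega
    have hdsb : G.dist s b = q''.length := by omega
    have hvs : v ≠ s := by
      intro h; subst h; omega
    have hsr : s < r := by
      rcases lt_or_ge s r with h | h
      · exact h
      · exfalso
        have hrs : r < s := lt_of_le_of_ne h h'.ne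
        have hadj : G.Adj v s := hG v r s hvr.symm h' hvs (Or.inl ⟨hrv, hrs⟩)
        have := SimpleGraph.dist_le (SimpleGraph.Walk.cons hadj ps)
        rw [SimpleGraph.Walk.length_cons, hps] at this
        omega
    have : b ≤ s := ih h' (by omega) hsr
    exact this.trans hsr.le

/-- On a shortest walk, if the first step goes up, the endpoint is above. -/
lemma aux_up (hG : IsClosedLabeling G) :
    ∀ {r b : Fin (n + 1)} (q : G.Walk r b) {v : Fin (n + 1)},
      G.Adj v r → q.length + 1 = G.dist v b → v < r → r ≤ b := by
  intro r b q
  induction q with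
  | nil => intro v _ _ _; exact le_rfl
  | @cons r s b h' q'' ih =>
    intro v hvr hlen hrv
    rw [SimpleGraph.Walk.length_cons] at hlen
    have hds : G.dist s b ≤ q''.length := SimpleGraph.dist_le q''
    obtain ⟨ps, hps⟩ := q''.reachable.exists_walk_length_eq_dist
    have hdr1 : G.dist r b ≤ G.dist s b + 1 := by
      have := SimpleGraph.dist_le (SimpleGraph.Walk.cons h' ps)
      rw [SimpleGraph.Walk.length_cons, hps] at this
      exact this
    obtain ⟨pr, hpr⟩ := (SimpleGraph.Walk.cons h' q'').reachable.exists_walk_length_eq_dist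
    have hdv1 : G.dist v b ≤ G.dist r b + 1 := by
      have := SimpleGraph.dist_le (SimpleGraph.Walk.cons hvr pr)
      rw [SimpleGraph.Walk.length_cons, hpr] at this
      exact this
    have hdr : G.dist r b = q''.length + 1 := by omega
    have hdsb : G.dist s b = q''.length := by omega
    have hvs : v ≠ s := by
      intro h; subst h; omega
    have hsr : r < s := by
      rcases lt_or_ge r s with h | h
      · exact h
      · exfalso
        have hrs : s < r := lt_of_le_of_ne h h'.ne'
        have hadj : G.Adj v s := hG v r s hvr.symm h' hvs (Or.inr ⟨hrv, hrs⟩)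
        have := SimpleGraph.dist_le (SimpleGraph.Walk.cons hadj ps)
        rw [SimpleGraph.Walk.length_cons, hps] at this
        omega
    have : s ≤ b := ih h' (by omega) hsr
    exact hsr.le.trans this

/-- Along a shortest walk from `v` up to `b`, a vertex adjacent to `b`
from below `v` is adjacent to `v`. -/
lemma aux_chain (hG : IsClosedLabeling G) :
    ∀ {v b : Fin (n + 1)} (p : G.Walk v b), p.length = G.dist v b → v ≤ b →
      ∀ {a : Fin (n + 1)}, G.Adj a b → a < v → G.Adj a v := by
  intro v b p
  induction p with
  | nil => intro _ _ a hab _; exact hab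
  | @cons v r b h q'' ih =>
    intro hlen hvb a hab hav
    rw [SimpleGraph.Walk.length_cons] at hlen
    have hds : G.dist r b ≤ q''.length := SimpleGraph.dist_le q''
    obtain ⟨ps, hps⟩ := q''.reachable.exists_walk_length_eq_dist
    have hdv1 : G.dist v b ≤ G.dist r b + 1 := by
      have := SimpleGraph.dist_le (SimpleGraph.Walk.cons h ps)
      rw [SimpleGraph.Walk.length_cons, hps] at this
      exact this
    have hdrb : G.dist r b = q''.length := by omega
    have hvneb : v ≠ b := by
      intro hveq
      subst hveq
      rw [(SimpleGraph.Reachable.dist_eq_zero_iff (by exact SimpleGraph.Reachable.refl v)).mpr rfl] at hlen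
      omega
    have hvltb : v < b := lt_of_le_of_ne hvb hvneb
    have hvr : v < r := by
      rcases lt_or_ge v r with hlt | hle
      · exact hlt
      · exfalso
        have hrv : r < v := lt_of_le_of_ne hle h.ne'
        have := aux_down hG q'' h (by omega) hrv
        exact absurd hvltb (by exact not_lt.mpr (this.trans hrv.le))
    have hrb : r ≤ b := aux_up hG q'' h (by omega) hvr
    rcases eq_or_lt_of_le hrb with heq | hrltb
    · -- r = b, so v ~ b
      have hvb' : G.Adj v b := heq ▸ h
      exact hG a b v hab.symm hvb'.symm (ne_of_lt hav) (Or.inr ⟨hav.trans hvltb, hvltb⟩)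
    · have har : G.Adj a r := ih (by omega) hrltb.le hab (hav.trans hvr)
      exact hG a r v har.symm h.symm (ne_of_lt hav) (Or.inr ⟨hav.trans hvr, hvr⟩)

/-- Umbrella lemma (lower half): if `a ~ b` and `a < w < b` then `a ~ w`. -/
lemma aux_umb (hconn : G.Connected) (hG : IsClosedLabeling G)
    {a w b : Fin (n + 1)} (hab : G.Adj a b) (haw : a < w) (hwb : w < b) :
    G.Adj a w := by
  obtain ⟨p, hp⟩ := hconn.exists_walk_length_eq_dist w b
  exact aux_chain hG p hp hwb.le hab haw

/-- Every nonzero vertex has a neighbor one closer to `0`. -/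
lemma aux_pred (hconn : G.Connected) {x : Fin (n + 1)} (hx : x ≠ 0) :
    ∃ z : Fin (n + 1), G.Adj z x ∧ G.dist 0 z + 1 = G.dist 0 x := by
  obtain ⟨p, hp⟩ := hconn.exists_walk_length_eq_dist x 0
  cases p with
  | nil => exact absurd rfl hx
  | @cons x z _ h q =>
    rw [SimpleGraph.Walk.length_cons] at hp
    have hds : G.dist z 0 ≤ q.length := SimpleGraph.dist_le q
    obtain ⟨ps, hps⟩ := q.reachable.exists_walk_length_eq_dist
    have hdx1 : G.dist x 0 ≤ G.dist z 0 + 1 := by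
      have := SimpleGraph.dist_le (SimpleGraph.Walk.cons h ps)
      rw [SimpleGraph.Walk.length_cons, hps] at this
      exact this
    refine ⟨z, h.symm, ?_⟩
    rw [SimpleGraph.dist_comm (u := (0 : Fin (n+1)))]
    rw [SimpleGraph.dist_comm (u := (0 : Fin (n+1)))]
    omega

/-- Monotonicity of distance from `0` with respect to the labeling. -/
lemma aux_mono (hconn : G.Connected) (hG : IsClosedLabeling G) :
    ∀ (x y : Fin (n + 1)), y ≤ x → G.dist 0 y ≤ G.dist 0 x := by
  suffices h : ∀ (k : ℕ) (x y : Fin (n + 1)), G.dist 0 x ≤ k → y ≤ x →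
      G.dist 0 y ≤ G.dist 0 x by
    intro x y hyx
    exact h (G.dist 0 x) x y le_rfl hyx
  intro k
  induction k with
  | zero =>
    intro x y hx hyx
    have hx0 : (0 : Fin (n+1)) = x := hconn.dist_eq_zero_iff.mp (Nat.le_zero.mp hx)
    have hy0 : y = 0 := le_antisymm (hx0 ▸ hyx) (Fin.zero_le y)
    rw [hy0, ← hx0]
  | succ k ih =>
    intro x y hx hyx
    rcases eq_or_lt_of_le hyx with rfl | hlt
    · exact le_rfl
    have hx0 : x ≠ 0 := by
      intro h
      subst h
      exact absurd hlt (by simp [Fin.lt_def])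
    obtain ⟨z, hz, hzd⟩ := aux_pred hconn hx0
    rcases le_or_gt y z with h1 | h2
    · have := ih z y (by omega) h1
      omega
    · have hzy : G.Adj z y := aux_umb hconn hG hz h2 hlt
      obtain ⟨p, hp⟩ := hconn.exists_walk_length_eq_dist 0 z
      have := SimpleGraph.dist_le (p.concat hzy)
      rw [SimpleGraph.Walk.length_concat, hp] at this
      omega

/-- Two distinct vertices at the same distance from `0` are adjacent. -/
lemma aux_samelayer (hconn : G.Connected) (hG : IsClosedLabeling G)
    {w v : Fin (n + 1)} (hwv : w < v) (hd : G.dist 0 w = G.dist 0 v) :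
    G.Adj w v := by
  have hv0 : v ≠ 0 := by
    intro h
    subst h
    exact absurd hwv (by simp [Fin.lt_def])
  obtain ⟨z, hz, hzd⟩ := aux_pred hconn hv0
  have hzw : z < w := by
    rcases lt_or_ge z w with h | h
    · exact h
    · exfalso
      have := aux_mono hconn hG z w h
      omega
  have hzy : G.Adj z w := aux_umb hconn hG hz hzw hwv
  exact hG w z v hzy hz (ne_of_lt hwv) (Or.inl ⟨hzw, hzw.trans hwv⟩)

end Aux

theorem nextLayer_nbhd_eq_interval {n : ℕ} (G : SimpleGraph (Fin (n + 1)))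
    (hconn : G.Connected) (hG : IsClosedLabeling G) (N : ℕ)
    (u m : Fin (n + 1)) (hu : u ∈ layer G N)
    (hm : IsLeast (layer G (N + 1)) m)
    (b : ℕ) (hb : b = {v | v ∈ layer G (N + 1) ∧ G.Adj u v}.ncard) (hbpos : 0 < b) :
    {v | v ∈ layer G (N + 1) ∧ G.Adj u v} =
      {v : Fin (n + 1) | (m : ℕ) ≤ (v : ℕ) ∧ (v : ℕ) ≤ (m : ℕ) + b - 1} := by
  have hud : G.dist 0 u = N := hu
  have hmd : G.dist 0 m = N + 1 := hm.1
  have hmle : ∀ v : Fin (n + 1), G.dist 0 v = N + 1 → m ≤ v := fun v hv => hm.2 hv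
  have hultv : ∀ v : Fin (n + 1), G.dist 0 v = N + 1 → u < v := by
    intro v hv
    rcases lt_or_ge u v with h | h
    · exact h
    · exfalso
      have := aux_mono hconn hG u v h
      omega
  -- downward closedness of the neighborhood set
  have hdc : ∀ v : Fin (n + 1), G.dist 0 v = N + 1 → G.Adj u v →
      ∀ w : Fin (n + 1), m ≤ w → w ≤ v → G.dist 0 w = N + 1 ∧ G.Adj u w := by
    intro v hv huv w hmw hwv
    have h1 : G.dist 0 w ≤ N + 1 := hv ▸ aux_mono hconn hG v w hwv
    have h2 : N + 1 ≤ G.dist 0 w := hmd ▸ aux_mono hconn hG w m hmw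
    have hwd : G.dist 0 w = N + 1 := le_antisymm h1 h2
    refine ⟨hwd, ?_⟩
    rcases eq_or_lt_of_le hwv with rfl | hlt
    · exact huv
    · have hwadj : G.Adj w v := aux_samelayer hconn hG hlt (by omega)
      have huw : u ≠ w := by
        intro h; subst h; omega
      exact hG u v w huv.symm hwadj.symm huw (Or.inr ⟨hultv v hv, hlt⟩)
  -- the set is finite and nonempty
  have hfin : {v | v ∈ layer G (N + 1) ∧ G.Adj u v}.Finite := Set.toFinite _
  have hpos : 0 < {v | v ∈ layer G (N + 1) ∧ G.Adj u v}.ncard := hb ▸ hbpos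
  have hne : {v | v ∈ layer G (N + 1) ∧ G.Adj u v}.Nonempty := (Set.ncard_pos hfin).mp hpos
  -- maximal element
  have hFne : hfin.toFinset.Nonempty := by rwa [Set.Finite.toFinset_nonempty]
  obtain ⟨vmax, hvmem, hvub⟩ : ∃ x, x ∈ {v | v ∈ layer G (N + 1) ∧ G.Adj u v} ∧
      ∀ w ∈ {v | v ∈ layer G (N + 1) ∧ G.Adj u v}, w ≤ x := by
    refine ⟨hfin.toFinset.max' hFne, ?_, ?_⟩
    · have := hfin.toFinset.max'_mem hFne
      rwa [Set.Finite.mem_toFinset] at this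
    · intro w hw
      exact hfin.toFinset.le_max' w (by rwa [Set.Finite.mem_toFinset])
  -- the set is an interval
  have hS : {v | v ∈ layer G (N + 1) ∧ G.Adj u v} = Set.Icc m vmax := by
    ext v
    constructor
    · intro hv
      exact ⟨hmle v hv.1, hvub v hv⟩
    · intro hv
      exact hdc vmax hvmem.1 hvmem.2 v hv.1 hv.2
  have hmvmax : m ≤ vmax := hmle vmax hvmem.1
  have hbval : b = (vmax : ℕ) + 1 - (m : ℕ) := by
    rw [hb, hS, ← Finset.coe_Icc, Set.ncard_coe_finset, Fin.card_Icc]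
  have hmvmax' : (m : ℕ) ≤ (vmax : ℕ) := hmvmax
  rw [hS]
  ext v
  simp only [Set.mem_Icc, Set.mem_setOf_eq, Fin.le_def]
  omega
end

section
/- Let G be connected with a closed labeling with layers L_0,...,L_h, N < h. If b_s is the number of edges from the s-th smallest vertex of L_N to L_{N+1}, then the sequence (b_1,...,b_{|L_N|}) is (weakly) increasing and its last term equals |L_{N+1}|. -/
/-- The number of edges from a vertex `u` to the `(N+1)`-st layer. -/
noncomputable def edgesToNext {n : ℕ} (G : SimpleGraph (Fin (n + 1))) (N : ℕ) (u : Fin (n + 1)) : ℕ :=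
  {v | v ∈ layer G (N + 1) ∧ G.Adj u v}.ncard

open SimpleGraph

lemma step_mono {n : ℕ} {G : SimpleGraph (Fin (n+1))} (hconn : G.Connected)
    (hG : IsClosedLabeling G) (L : ℕ) :
    ∀ (b c t : Fin (n+1)) (h : G.Adj b t) (q : G.Walk t c),
      (SimpleGraph.Walk.cons h q).length = G.dist b c →
      (SimpleGraph.Walk.cons h q).length = L →
      ((b < c → b < t) ∧ (c < b → t < b)) := by
  induction L using Nat.strong_induction_on with
  | _ L IH =>
    intro b c t h q hshort hlen
    cases q with
    | nil => exact ⟨fun hbc => hbc, fun hcb => hcb⟩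
    | @cons _ s _ h' q' =>
      set M := q'.length with hM
      have hlen2 : M + 2 = L := by simpa [hM] using hlen
      have hdbc : G.dist b c = M + 2 := by
        rw [← hshort]; simp [hM]
      have hdbt : G.dist b t = 1 := dist_eq_one_iff_adj.mpr h
      have hdts : G.dist t s = 1 := dist_eq_one_iff_adj.mpr h'
      have hdtc : G.dist t c = M + 1 := by
        have h1 : G.dist t c ≤ M + 1 := by
          have := SimpleGraph.dist_le (Walk.cons h' q')
          simpa [hM] using this
        have h2 := hconn.dist_triangle (u := b) (v := t) (w := c)
        omega
      have hdsc : G.dist s c = M := by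
        have h1 : G.dist s c ≤ M := by simpa [hM] using SimpleGraph.dist_le q'
        have h2 := hconn.dist_triangle (u := t) (v := s) (w := c)
        omega
      have hbs : b ≠ s := by
        intro hbs; rw [hbs] at hdbc; omega
      have hIH := IH (M + 1) (by omega) t c s h' q' (by simp [hM, hdtc]) (by simp [hM])
      have hshortcut : G.Adj b s → False := by
        intro hadj
        have h1 : G.dist b s = 1 := dist_eq_one_iff_adj.mpr hadj
        have h2 := hconn.dist_triangle (u := b) (v := s) (w := c)
        omega
      constructor
      · intro hbc
        rcases lt_trichotomy b t with hlt | heq | hgt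
        · exact hlt
        · exact absurd heq h.ne
        · -- t < b
          have hts : t < s := hIH.1 (lt_trans hgt hbc)
          exact absurd (hG b t s h.symm h' hbs (Or.inl ⟨hgt, hts⟩)) hshortcut
      · intro hcb
        rcases lt_trichotomy t b with hlt | heq | hgt
        · exact hlt
        · exact absurd heq h.ne.symm
        · -- b < t
          have hst : s < t := hIH.2 (lt_trans hcb hgt)
          exact absurd (hG b t s h.symm h' hbs (Or.inr ⟨hgt, hst⟩)) hshortcut

lemma between {n : ℕ} {G : SimpleGraph (Fin (n+1))} (hconn : G.Connected)
    (hG : IsClosedLabeling G) {b c : Fin (n+1)} (hbc : b < c) (h2 : 2 ≤ G.dist b c) :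
    ∃ t, G.Adj t c ∧ b < t ∧ t < c ∧ G.dist b t = G.dist b c - 1 := by
  obtain ⟨p, hp⟩ := hconn.exists_walk_length_eq_dist c b
  have hdcb : G.dist c b = G.dist b c := SimpleGraph.dist_comm
  cases p with
  | nil => exact absurd rfl hbc.ne'
  | @cons _ t _ h q =>
    have hlen : (Walk.cons h q).length = G.dist c b := hp
    have htltc : t < c := (step_mono hconn hG _ c b t h q hlen rfl).2 hbc
    have hdct : G.dist c t = 1 := dist_eq_one_iff_adj.mpr h
    have hdtb : G.dist t b = G.dist b c - 1 := by
      have h1 : G.dist t b ≤ q.length := SimpleGraph.dist_le q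
      have h3 := hconn.dist_triangle (u := c) (v := t) (w := b)
      have h4 : q.length + 1 = G.dist c b := by simpa using hlen
      omega
    have hbt : b < t := by
      rcases lt_trichotomy b t with hlt | heq | hgt
      · exact hlt
      · exfalso
        subst heq
        rw [SimpleGraph.dist_self] at hdtb
        omega
      · -- t < b
        exfalso
        have hq : q.length = G.dist t b := by
          have h4 : q.length + 1 = G.dist c b := by simpa using hlen
          omega
        cases q with
        | nil =>
          simp at hq
          omega
        | @cons _ s _ h' q' =>
          have hts : t < s := (step_mono hconn hG _ t b s h' q' hq rfl).1 hgt
          have hdsb : G.dist s b ≤ q'.length := SimpleGraph.dist_le q'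
          have hq'len : q'.length + 2 = G.dist c b := by simpa using hlen
          have hcs : c ≠ s := by
            intro hcs
            subst hcs
            omega
          have hadj : G.Adj c s := hG c t s h.symm h' hcs (Or.inl ⟨htltc, hts⟩)
          have h5 : G.dist c s = 1 := dist_eq_one_iff_adj.mpr hadj
          have h6 := hconn.dist_triangle (u := c) (v := s) (w := b)
          omega
    exact ⟨t, h.symm, hbt, htltc, by rw [SimpleGraph.dist_comm]; exact hdtb⟩

lemma umbrella {n : ℕ} {G : SimpleGraph (Fin (n+1))} (hconn : G.Connected)
    (hG : IsClosedLabeling G) (L : ℕ) :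
    ∀ a b c : Fin (n+1), a < b → b < c → G.Adj a c → G.dist b c = L →
      G.Adj b c ∧ G.Adj a b := by
  induction L using Nat.strong_induction_on with
  | _ L IH =>
    intro a b c hab hbc hac hd
    have hpos : 1 ≤ L := hd ▸ hconn.pos_dist_of_ne hbc.ne
    rcases eq_or_lt_of_le hpos with h1 | h2
    · have hadjbc : G.Adj b c := dist_eq_one_iff_adj.mp (hd.trans h1.symm)
      exact ⟨hadjbc, hG a c b hac.symm hadjbc.symm hab.ne
        (Or.inr ⟨lt_trans hab hbc, hbc⟩)⟩
    · obtain ⟨t, htc, hbt, htltc, hdbt⟩ := between hconn hG hbc (hd ▸ h2)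
      have hat : a ≠ t := (lt_trans hab hbt).ne
      have hadjat : G.Adj a t := hG a c t hac.symm htc.symm hat
        (Or.inr ⟨lt_trans hab (lt_trans hbt htltc), htltc⟩)
      have hIH := IH (L - 1) (by omega) a b t hab hbt hadjat (by omega)
      have hadjbc : G.Adj b c := hG b a c hIH.2 hac hbc.ne
        (Or.inl ⟨hab, lt_trans hab hbc⟩)
      exact ⟨hadjbc, hIH.2⟩

lemma dist_mono {n : ℕ} {G : SimpleGraph (Fin (n+1))} (hconn : G.Connected)
    (hG : IsClosedLabeling G) (L : ℕ) :
    ∀ w : Fin (n+1), G.dist 0 w = L → ∀ v, v ≤ w → G.dist 0 v ≤ L := by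
  induction L using Nat.strong_induction_on with
  | _ L IH =>
    intro w hw v hvw
    rcases eq_or_lt_of_le hvw with rfl | hlt
    · exact hw.le
    rcases eq_or_lt_of_le (Fin.zero_le v) with rfl | h0v
    · simp [SimpleGraph.dist_self]
    have h0w : (0 : Fin (n+1)) < w := lt_trans h0v hlt
    have hpos : 1 ≤ L := hw ▸ hconn.pos_dist_of_ne h0w.ne
    rcases eq_or_lt_of_le hpos with h1 | h2
    · -- L = 1
      have hadj : G.Adj 0 w := dist_eq_one_iff_adj.mp (hw.trans h1.symm)
      obtain ⟨_, h0v'⟩ := umbrella hconn hG (G.dist v w) 0 v w h0v hlt hadj rfl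
      calc G.dist 0 v = 1 := dist_eq_one_iff_adj.mpr h0v'
        _ ≤ L := hpos
    · -- L ≥ 2
      obtain ⟨t, htw, h0t, htw', hdt⟩ := between hconn hG h0w (by omega)
      rw [hw] at hdt
      rcases le_or_gt v t with hvt | htv
      · have := IH (L - 1) (by omega) t hdt v hvt
        omega
      · obtain ⟨_, htv'⟩ := umbrella hconn hG (G.dist v w) t v w htv hlt htw rfl
        have h5 : G.dist t v = 1 := dist_eq_one_iff_adj.mpr htv'
        have h6 := hconn.dist_triangle (u := (0 : Fin (n+1))) (v := t) (w := v)
        omega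

lemma adj_of_le_layer {n : ℕ} {G : SimpleGraph (Fin (n+1))} (hconn : G.Connected)
    (hG : IsClosedLabeling G) {N : ℕ} {u u' v : Fin (n+1)}
    (hu : G.dist 0 u = N) (hu' : G.dist 0 u' = N) (huu' : u ≤ u')
    (hv : G.dist 0 v = N + 1) (hadj : G.Adj u v) : G.Adj u' v := by
  rcases eq_or_lt_of_le huu' with rfl | hlt
  · exact hadj
  have hu'v : u' < v := by
    rcases le_or_gt v u' with hle | h
    · exact absurd (dist_mono hconn hG N u' hu' v hle) (by omega)
    · exact h
  exact (umbrella hconn hG (G.dist u' v) u u' v hlt hu'v hadj rfl).1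

lemma exists_pred {n : ℕ} {G : SimpleGraph (Fin (n+1))} (hconn : G.Connected)
    {N : ℕ} {v : Fin (n+1)} (hv : G.dist 0 v = N + 1) :
    ∃ w, G.Adj w v ∧ G.dist 0 w = N := by
  obtain ⟨p, hp⟩ := hconn.exists_walk_length_eq_dist v 0
  have hdv : G.dist v 0 = N + 1 := by rw [SimpleGraph.dist_comm]; exact hv
  cases p with
  | nil =>
    rw [SimpleGraph.dist_self] at hdv
    omega
  | @cons _ w _ h q =>
    refine ⟨w, h.symm, ?_⟩
    have h1 : G.dist w 0 ≤ q.length := SimpleGraph.dist_le q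
    have h2 : q.length + 1 = N + 1 := by simpa [hdv] using hp
    have h3 : G.dist v w = 1 := dist_eq_one_iff_adj.mpr h
    have h4 := hconn.dist_triangle (u := v) (v := w) (w := (0 : Fin (n+1)))
    have h5 : G.dist 0 w = G.dist w 0 := SimpleGraph.dist_comm
    omega

theorem sequence_increasing_and_last {n : ℕ} (G : SimpleGraph (Fin (n + 1)))
    (hconn : G.Connected) (hG : IsClosedLabeling G) (N : ℕ) (hN : N < G.diam) :
    (∀ u ∈ layer G N, ∀ u' ∈ layer G N, u ≤ u' →
      edgesToNext G N u ≤ edgesToNext G N u') ∧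
    (∀ d : Fin (n + 1), IsGreatest (layer G N) d →
      edgesToNext G N d = (layer G (N + 1)).ncard) := by
  constructor
  · intro u hu u' hu' huu'
    apply Set.ncard_le_ncard ?_ (Set.toFinite _)
    rintro v ⟨hvl, hadj⟩
    exact ⟨hvl, adj_of_le_layer hconn hG hu hu' huu' hvl hadj⟩
  · intro d hd
    have hset : {v | v ∈ layer G (N + 1) ∧ G.Adj d v} = layer G (N + 1) := by
      ext v
      simp only [Set.mem_setOf_eq]
      constructor
      · exact fun h => h.1
      · intro hv
        refine ⟨hv, ?_⟩
        obtain ⟨w, hadj, hw⟩ := exists_pred hconn hv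
        exact adj_of_le_layer hconn hG hw hd.1 (hd.2 hw) hv hadj
    rw [edgesToNext, hset]
end

section
/- Fix n and a partition n = a_0 + a_1 + ... + a_h with a_0 = 1 and all a_N ≥ 1, and set L_N = [a_0+...+a_{N-1}+1, a_0+...+a_N]. The number of graphs G on vertex set [n] that are connected, closed with respect to the identity labeling, and have L_N as their N-th layer (set of vertices at distance N from 1) for all N, equals ∏_{N=0}^{h-1} C(a_{N+1} + a_N - 1, a_N - 1). -/
open Finset

lemma Fin.val_add_sub_le_of_strictMono {p m : ℕ} {g : Fin p → Fin m} (hg : StrictMono g)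
    {i j : Fin p} (hij : i ≤ j) : (g i : ℕ) + (j - i) ≤ g j := by
  have h := card_le_card_of_injOn g (s := Icc i j) (t := Icc (g i) (g j))
    (fun k hk => by
      simp only [coe_Icc, Set.mem_Icc] at hk ⊢
      exact ⟨hg.monotone hk.1, hg.monotone hk.2⟩) hg.injective.injOn
  rw [Fin.card_Icc, Fin.card_Icc] at h
  have := hg.monotone hij
  rw [Fin.le_def] at hij this
  omega

/-- Stars and bars: `f ↦ (i ↦ f i + i)`. -/
def Fin.orderHomEquivOrderEmbedding (p q : ℕ) :
    (Fin p →o Fin (q + 1)) ≃ (Fin p ↪o Fin (p + q)) where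
  toFun f := OrderEmbedding.ofStrictMono (fun i => ⟨f i + i, by omega⟩) fun i j hij => by
    have := f.monotone hij.le
    rw [Fin.lt_def] at hij ⊢
    rw [Fin.le_def] at this
    simp only
    omega
  invFun g := ⟨fun i => ⟨g i - i, by
      have hi := i.isLt
      have := Fin.val_add_sub_le_of_strictMono g.strictMono
        (show i ≤ ⟨p - 1, by omega⟩ from Fin.le_def.2 (by simp; omega))
      simp only at this
      omega⟩, fun i j hij => by
    have := Fin.val_add_sub_le_of_strictMono g.strictMono hij
    rw [Fin.le_def] at hij ⊢
    simp only
    omega⟩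
  left_inv f := by ext i; exact Nat.add_sub_cancel _ _
  right_inv g := by
    ext i
    have hi := i.isLt
    have := Fin.val_add_sub_le_of_strictMono g.strictMono
      (show ⟨0, by omega⟩ ≤ i from Fin.le_def.2 (Nat.zero_le _))
    simp only at this
    exact Nat.sub_add_cancel (by omega)

lemma Fin.natCard_orderHom (p q : ℕ) :
    Nat.card (Fin p →o Fin (q + 1)) = (p + q).choose q := by
  rw [Nat.card_congr (Fin.orderHomEquivOrderEmbedding p q),
    Nat.card_congr Set.powersetCard.ofFinEmbEquiv, Set.powersetCard.card, Nat.card_fin,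
    Nat.choose_symm_add]

lemma Nat.card_orderHom (α β : Type*) [LinearOrder α] [Fintype α] [LinearOrder β] [Fintype β]
    [Nonempty β] :
    Nat.card (α →o β) = (Nat.card α + Nat.card β - 1).choose (Nat.card β - 1) := by
  obtain ⟨q, hq⟩ : ∃ q, Nat.card β = q + 1 := Nat.exists_eq_succ_of_ne_zero Nat.card_pos.ne'
  let e : (α →o β) ≃o (Fin (Nat.card α) →o Fin (q + 1)) := OrderIso.arrowCongr
    (Fintype.orderIsoFinOfCardEq α Nat.card_eq_fintype_card.symm).symm
    (Fintype.orderIsoFinOfCardEq β (Nat.card_eq_fintype_card.symm.trans hq)).symm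
  rw [Nat.card_congr e.toEquiv, Fin.natCard_orderHom, hq]
  simp

lemma IsClosedLabeling.adj_of_lt {n : ℕ} {G : SimpleGraph (Fin n)} (hG : IsClosedLabeling G)
    {u v w : Fin n} (hvu : G.Adj v u) (hvw : G.Adj v w) (hne : u ≠ w) (hu : v < u) (hw : v < w) :
    G.Adj u w :=
  hG u v w hvu hvw hne (.inl ⟨hu, hw⟩)

lemma IsClosedLabeling.adj_of_gt {n : ℕ} {G : SimpleGraph (Fin n)} (hG : IsClosedLabeling G)
    {u v w : Fin n} (hvu : G.Adj v u) (hvw : G.Adj v w) (hne : u ≠ w) (hu : u < v) (hw : w < v) :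
    G.Adj u w :=
  hG u v w hvu hvw hne (.inr ⟨hu, hw⟩)

lemma IsClosedLabeling.of_lt {n : ℕ} {G : SimpleGraph (Fin n)}
    (H : ∀ ⦃u v w⦄, u < w → G.Adj v u → G.Adj v w → (v < u ∧ v < w) ∨ (u < v ∧ w < v) → G.Adj u w) :
    IsClosedLabeling G := by
  intro u v w hvu hvw huw horder
  rcases huw.lt_or_gt with huw | hwu
  · exact H huw hvu hvw horder
  · exact (H hwu hvw hvu (horder.imp And.symm And.symm)).symm

lemma SimpleGraph.exists_adj_dist_add_one {V : Type*} {G : SimpleGraph V} {r v : V}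
    (hv : G.dist r v ≠ 0) : ∃ u, G.Adj u v ∧ G.dist r u + 1 = G.dist r v := by
  obtain ⟨p, hp⟩ := SimpleGraph.exists_walk_of_dist_ne_zero hv
  have hnil : ¬p.Nil := fun h => hv (by rw [← hp, h.length_eq_zero])
  refine ⟨p.penultimate, p.adj_penultimate hnil, ?_⟩
  have hle : G.dist r p.penultimate ≤ p.length - 1 :=
    (SimpleGraph.dist_le p.dropLast).trans_eq p.length_dropLast
  have := (p.adj_penultimate hnil).diff_dist_adj (u := r)
  omega

namespace ClosedGraph

variable {α : Type*} [LinearOrder α] {ℓ : α → ℕ} {m : α → α} {u v : α}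

/-- The normalisation `m v = v` on layer `0` makes `m` recoverable from `layerGraph ℓ m`. -/
structure IsParentMap (ℓ : α → ℕ) (m : α → α) : Prop where
  eq_self_of_eq_zero : ∀ v, ℓ v = 0 → m v = v
  succ_eq : ∀ v, ℓ v ≠ 0 → ℓ (m v) + 1 = ℓ v
  monotoneOn_layer : ∀ ⦃u v⦄, ℓ u = ℓ v → u ≤ v → m u ≤ m v

def layerGraph (ℓ : α → ℕ) (m : α → α) : SimpleGraph α :=
  SimpleGraph.fromRel fun u v => ℓ u = ℓ v ∨ ℓ u + 1 = ℓ v ∧ m v ≤ u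

lemma layerGraph_adj : (layerGraph ℓ m).Adj u v ↔
    u ≠ v ∧ (ℓ u = ℓ v ∨ ℓ u + 1 = ℓ v ∧ m v ≤ u ∨ ℓ v + 1 = ℓ u ∧ m u ≤ v) := by
  simp only [layerGraph, SimpleGraph.fromRel_adj, eq_comm (a := ℓ v)]
  tauto

lemma layerGraph_adj_of_succ (h : ℓ u + 1 = ℓ v) : (layerGraph ℓ m).Adj u v ↔ m v ≤ u := by
  rw [layerGraph_adj]
  constructor
  · rintro ⟨-, h' | ⟨-, hle⟩ | ⟨h', -⟩⟩
    · omega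
    · exact hle
    · omega
  · exact fun hle => ⟨by rintro rfl; omega, .inr (.inl ⟨h, hle⟩)⟩

lemma layerGraph_adj_of_lt (hℓ : Monotone ℓ) (huv : u < v) :
    (layerGraph ℓ m).Adj u v ↔ ℓ u = ℓ v ∨ ℓ u + 1 = ℓ v ∧ m v ≤ u := by
  have := hℓ huv.le
  rw [layerGraph_adj]
  constructor
  · rintro ⟨-, h | h | ⟨h, -⟩⟩
    · exact .inl h
    · exact .inr h
    · omega
  · exact fun h => ⟨huv.ne, h.imp_right .inl⟩

lemma layerGraph_adj_le (hadj : (layerGraph ℓ m).Adj u v) : ℓ v ≤ ℓ u + 1 := by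
  rcases (layerGraph_adj.1 hadj).2 with h | ⟨h, -⟩ | ⟨h, -⟩ <;> omega

lemma IsParentMap.adj (hm : IsParentMap ℓ m) (hv : ℓ v ≠ 0) : (layerGraph ℓ m).Adj (m v) v :=
  (layerGraph_adj_of_succ (hm.succ_eq v hv)).2 le_rfl

lemma layerGraph_injOn : Set.InjOn (layerGraph ℓ) {m | IsParentMap ℓ m} := by
  have key : ∀ {m m' : α → α}, IsParentMap ℓ m → layerGraph ℓ m = layerGraph ℓ m' →
      ∀ v, ℓ v ≠ 0 → m' v ≤ m v := fun hm heq v hv =>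
    (layerGraph_adj_of_succ (hm.succ_eq v hv)).1 (heq ▸ hm.adj hv)
  intro m hm m' hm' heq
  funext v
  by_cases hv : ℓ v = 0
  · rw [hm.eq_self_of_eq_zero v hv, hm'.eq_self_of_eq_zero v hv]
  · exact le_antisymm (key hm' heq.symm v hv) (key hm heq v hv)

section Equiv

variable {h : ℕ} (hℓ : ∀ v, ℓ v ≤ h)

def parentMapOfLayers (F : (N : Fin h) → ({v // ℓ v = N + 1} →o {v // ℓ v = N})) (v : α) : α :=
  if hv : ℓ v = 0 then v else (F ⟨ℓ v - 1, by have := hℓ v; omega⟩ ⟨v, by simp; omega⟩).1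

lemma parentMapOfLayers_eq (F : (N : Fin h) → ({v // ℓ v = N + 1} →o {v // ℓ v = N}))
    (N : Fin h) {v : α} (hv : ℓ v = N + 1) : parentMapOfLayers hℓ F v = F N ⟨v, hv⟩ := by
  have key : ∀ N' : Fin h, N' = N → ∀ hv' : ℓ v = N' + 1, (F N' ⟨v, hv'⟩).1 = F N ⟨v, hv⟩ := by
    rintro _ rfl _
    rfl
  rw [parentMapOfLayers, dif_neg (by omega)]
  exact key _ (Fin.ext (by simp; omega)) _

lemma isParentMap_parentMapOfLayers
    (F : (N : Fin h) → ({v // ℓ v = N + 1} →o {v // ℓ v = N})) :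
    IsParentMap ℓ (parentMapOfLayers hℓ F) where
  eq_self_of_eq_zero v hv := dif_pos hv
  succ_eq v hv := by
    have := hℓ v
    rw [parentMapOfLayers_eq hℓ F ⟨ℓ v - 1, by omega⟩ (by simp; omega), (F _ _).2]
    simp only
    omega
  monotoneOn_layer u v huv hle := by
    by_cases hv : ℓ v = 0
    · simpa only [parentMapOfLayers, dif_pos hv, dif_pos (huv.trans hv)]
    have := hℓ v
    rw [parentMapOfLayers_eq hℓ F ⟨ℓ v - 1, by omega⟩ (by simp; omega),
      parentMapOfLayers_eq hℓ F ⟨ℓ v - 1, by omega⟩ (by simp; omega)]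
    exact (F _).monotone hle

def parentMapEquiv :
    {m // IsParentMap ℓ m} ≃ ((N : Fin h) → ({v // ℓ v = N + 1} →o {v // ℓ v = N})) where
  toFun m N :=
    { toFun v := ⟨m.1 v, by have := v.2; have := m.2.succ_eq v.1 (by omega); omega⟩
      monotone' u v huv := m.2.monotoneOn_layer (u.2.trans v.2.symm) huv }
  invFun F := ⟨parentMapOfLayers hℓ F, isParentMap_parentMapOfLayers hℓ F⟩
  left_inv m := by
    ext v
    by_cases hv : ℓ v = 0
    · exact (dif_pos hv).trans (m.2.eq_self_of_eq_zero v hv).symm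
    · have := hℓ v
      dsimp only
      rw [parentMapOfLayers_eq hℓ _ ⟨ℓ v - 1, by omega⟩ (v := v) (by simp; omega)]
      rfl
  right_inv F := by
    ext N v
    exact parentMapOfLayers_eq hℓ F N v.2

end Equiv

section Backward

variable {r : α} (hr : ∀ v, ℓ v = 0 ↔ v = r)
include hr

lemma IsParentMap.exists_walk_length_eq (hm : IsParentMap ℓ m) (v : α) :
    ∃ p : (layerGraph ℓ m).Walk r v, p.length = ℓ v := by
  induction hk : ℓ v generalizing v with
  | zero =>
    obtain rfl := (hr v).1 hk
    exact ⟨.nil, rfl⟩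
  | succ k ih =>
    have hmv := hm.succ_eq v (by omega)
    obtain ⟨p, hp⟩ := ih (m v) (by omega)
    exact ⟨p.concat (hm.adj (by omega)), by rw [SimpleGraph.Walk.length_concat, hp]⟩

omit hr in
lemma layerGraph_le_add_length {u v : α} (p : (layerGraph ℓ m).Walk u v) :
    ℓ v ≤ ℓ u + p.length := by
  induction p with
  | nil => simp
  | cons hadj _ ih =>
    have := layerGraph_adj_le hadj
    rw [SimpleGraph.Walk.length_cons]
    omega

lemma IsParentMap.dist_layerGraph (hm : IsParentMap ℓ m) (v : α) :
    (layerGraph ℓ m).dist r v = ℓ v := by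
  obtain ⟨p, hp⟩ := hm.exists_walk_length_eq hr v
  obtain ⟨q, hq⟩ := p.reachable.exists_walk_length_eq_dist
  have := SimpleGraph.dist_le p
  have := layerGraph_le_add_length q
  have := (hr r).2 rfl
  omega

lemma IsParentMap.reachable (hm : IsParentMap ℓ m) (v : α) : (layerGraph ℓ m).Reachable r v :=
  let ⟨p, _⟩ := hm.exists_walk_length_eq hr v
  p.reachable

lemma IsParentMap.connected_layerGraph (hm : IsParentMap ℓ m) : (layerGraph ℓ m).Connected :=
  have : Nonempty α := ⟨r⟩
  .mk fun u v => (hm.reachable hr u).symm.trans (hm.reachable hr v)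

end Backward

lemma IsParentMap.isClosedLabeling_layerGraph {n : ℕ} {ℓ : Fin n → ℕ} {m : Fin n → Fin n}
    (hm : IsParentMap ℓ m) (hℓ : Monotone ℓ) : IsClosedLabeling (layerGraph ℓ m) := by
  refine .of_lt fun u v w huw hvu hvw horder => (layerGraph_adj_of_lt hℓ huw).2 ?_
  have := hℓ huw.le
  rcases horder with ⟨hvu', hvw'⟩ | ⟨huv', hwv'⟩
  · rw [layerGraph_adj_of_lt hℓ hvu'] at hvu
    rw [layerGraph_adj_of_lt hℓ hvw'] at hvw
    rcases hvu with hu | ⟨hu, -⟩ <;> rcases hvw with hw | ⟨hw, hmw⟩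
    · exact .inl (hu.symm.trans hw)
    · exact .inr ⟨by omega, hmw.trans hvu'.le⟩
    · omega
    · exact .inl (by omega)
  · rw [SimpleGraph.adj_comm, layerGraph_adj_of_lt hℓ huv'] at hvu
    rw [SimpleGraph.adj_comm, layerGraph_adj_of_lt hℓ hwv'] at hvw
    rcases hvu with hu | ⟨hu, hmv⟩ <;> rcases hvw with hw | ⟨hw, -⟩
    · exact .inl (hu.trans hw.symm)
    · omega
    · exact .inr ⟨by omega, (hm.monotoneOn_layer hw hwv'.le).trans hmv⟩
    · exact .inl (by omega)

section Forward

variable {V : Type*} [Fintype V] (G : SimpleGraph V) (r : V)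

open Classical in
noncomputable def parents (v : V) : Finset V := {u | G.Adj u v ∧ G.dist r u + 1 = G.dist r v}

variable {G r} in
lemma mem_parents {u v : V} : u ∈ parents G r v ↔ G.Adj u v ∧ G.dist r u + 1 = G.dist r v := by
  simp [parents]

variable [LinearOrder V]

noncomputable def parentMap (v : V) : V :=
  if h : (parents G r v).Nonempty then (parents G r v).min' h else v

variable {G r}

lemma parentMap_spec {v : V} (hv : G.dist r v ≠ 0) :
    G.Adj (parentMap G r v) v ∧ G.dist r (parentMap G r v) + 1 = G.dist r v := by
  obtain ⟨u, hu⟩ := SimpleGraph.exists_adj_dist_add_one hv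
  have hne : (parents G r v).Nonempty := ⟨u, mem_parents.2 hu⟩
  rw [parentMap, dif_pos hne, ← mem_parents]
  exact min'_mem _ hne

lemma parentMap_le {u v : V} (hadj : G.Adj u v) (hu : G.dist r u + 1 = G.dist r v) :
    parentMap G r v ≤ u := by
  have hmem : u ∈ parents G r v := mem_parents.2 ⟨hadj, hu⟩
  rw [parentMap, dif_pos ⟨u, hmem⟩]
  exact min'_le _ _ hmem

lemma parentMap_of_dist_eq_zero {v : V} (hv : G.dist r v = 0) : parentMap G r v = v :=
  dif_neg fun ⟨u, hu⟩ => by have := (mem_parents.1 hu).2; omega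

end Forward

section ClosedGraphs

variable {n : ℕ} {G : SimpleGraph (Fin n)} {r : Fin n}
  (hconn : G.Connected) (hG : IsClosedLabeling G) (hd : Monotone (G.dist r))
include hconn hG hd

lemma adj_of_dist_eq {u w : Fin n} (h : G.dist r u = G.dist r w) (hne : u ≠ w) : G.Adj u w := by
  induction hk : G.dist r u generalizing u w with
  | zero =>
    exact absurd ((hconn.dist_eq_zero_iff.1 hk).symm.trans
      (hconn.dist_eq_zero_iff.1 (h.symm.trans hk))) hne
  | succ k ih =>
    obtain ⟨p, hpw, hp⟩ := SimpleGraph.exists_adj_dist_add_one (G := G) (r := r) (v := w) (by omega)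
    obtain ⟨q, hqu, hq⟩ := SimpleGraph.exists_adj_dist_add_one (G := G) (r := r) (v := u) (by omega)
    wlog hpq : p ≤ q generalizing u w p q
    · exact (this h.symm hne.symm (by omega) q hqu hq p hpw hp (le_of_not_ge hpq)).symm
    have hpu : p < u := hd.reflect_lt (by omega)
    have hpw' : p < w := hd.reflect_lt (by omega)
    have hqu' : q < u := hd.reflect_lt (by omega)
    have hqw : q < w := hd.reflect_lt (by omega)
    rcases hpq.eq_or_lt with rfl | hpq
    · exact hG.adj_of_lt hqu hpw hne hqu' hpw'
    · have hpq' : G.Adj p q := ih (by omega) hpq.ne (by omega)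
      exact hG.adj_of_lt hqu (hG.adj_of_lt hpq' hpw hqw.ne hpq hpw') hne hqu' hqw

lemma adj_of_adj_of_le {u v q : Fin n} (hadj : G.Adj u v) (hv : G.dist r u + 1 = G.dist r v)
    (hq : G.dist r q = G.dist r u) (huq : u ≤ q) : G.Adj q v := by
  rcases huq.eq_or_lt with rfl | huq
  · exact hadj
  · exact hG.adj_of_lt (adj_of_dist_eq hconn hG hd hq.symm huq.ne) hadj (by rintro rfl; omega)
      huq (hd.reflect_lt (by omega))

lemma isParentMap_parentMap : IsParentMap (G.dist r) (parentMap G r) where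
  eq_self_of_eq_zero _ := parentMap_of_dist_eq_zero
  succ_eq _ hv := (parentMap_spec hv).2
  monotoneOn_layer u v huv hle := by
    rcases hle.eq_or_lt with rfl | hlt
    · exact le_rfl
    have hv : G.dist r v ≠ 0 := fun hv =>
      hlt.ne ((hconn.dist_eq_zero_iff.1 (huv.trans hv)).symm.trans (hconn.dist_eq_zero_iff.1 hv))
    obtain ⟨hpv, hp⟩ := parentMap_spec hv
    have hpu : G.Adj (parentMap G r v) u := hG.adj_of_gt hpv.symm
      (adj_of_dist_eq hconn hG hd huv hlt.ne).symm (by rintro h; rw [h] at hp; omega)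
      (hd.reflect_lt (by omega)) hlt
    exact parentMap_le hpu (by omega)

lemma layerGraph_parentMap : layerGraph (G.dist r) (parentMap G r) = G := by
  ext u v
  rw [layerGraph_adj]
  constructor
  · rintro ⟨hne, h | ⟨h, hle⟩ | ⟨h, hle⟩⟩
    · exact adj_of_dist_eq hconn hG hd h hne
    · obtain ⟨hpv, hp⟩ := parentMap_spec (G := G) (r := r) (v := v) (by omega)
      exact adj_of_adj_of_le hconn hG hd hpv hp (by omega) hle
    · obtain ⟨hpu, hp⟩ := parentMap_spec (G := G) (r := r) (v := u) (by omega)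
      exact (adj_of_adj_of_le hconn hG hd hpu hp (by omega) hle).symm
  · intro hadj
    refine ⟨hadj.ne, ?_⟩
    have := hadj.diff_dist_adj (u := r)
    rcases lt_trichotomy (G.dist r u) (G.dist r v) with h | h | h
    · exact .inr (.inl ⟨by omega, parentMap_le hadj (by omega)⟩)
    · exact .inl h
    · exact .inr (.inr ⟨by omega, parentMap_le hadj.symm (by omega)⟩)

end ClosedGraphs

section LayerIndex

variable (h : ℕ) (a : ℕ → ℕ) {n : ℕ}

def layerIndex (v : Fin n) : ℕ := Nat.findGreatest (fun N => ∑ M ∈ range N, a M ≤ v) h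

lemma layerIndex_le (v : Fin n) : layerIndex h a v ≤ h := Nat.findGreatest_le h

lemma monotone_layerIndex : Monotone (layerIndex h a (n := n)) := fun _ _ huv =>
  Nat.findGreatest_mono_left (fun _ hN => hN.trans huv) h

variable {h a}

lemma layerIndex_eq_iff {N : ℕ} {v : Fin n} (hN : N ≤ h) (hv : v < ∑ M ∈ range (h + 1), a M) :
    layerIndex h a v = N ↔ ∑ M ∈ range N, a M ≤ v ∧ v < ∑ M ∈ range (N + 1), a M := by
  rw [layerIndex, Nat.findGreatest_eq_iff]
  constructor
  · rintro ⟨-, hle, hgt⟩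
    refine ⟨?_, ?_⟩
    · rcases N with _ | N
      · simp
      · exact hle N.succ_ne_zero
    · rcases hN.lt_or_eq with hN | rfl
      · exact not_le.1 (hgt N.lt_succ_self hN)
      · exact hv
  · rintro ⟨hle, hlt⟩
    exact ⟨hN, fun _ => hle, fun k hk _ =>
      (hlt.trans_le ((sum_mono_set a).comp range_mono hk)).not_ge⟩

lemma layerIndex_eq_zero_iff (ha0 : a 0 = 1) (hsum : ∑ M ∈ range (h + 1), a M = n) {v : Fin n}
    (hn : 0 < n) : layerIndex h a v = 0 ↔ v = ⟨0, hn⟩ := by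
  rw [layerIndex_eq_iff (Nat.zero_le h) (hsum ▸ v.2), Fin.ext_iff]
  simp [ha0]

lemma forall_layer_eq_iff (hsum : ∑ M ∈ range (h + 1), a M = n) (d : Fin n → ℕ) :
    (∀ N ≤ h, {v : Fin n | d v = N} =
      {v : Fin n | ∑ M ∈ range N, a M ≤ v ∧ v < ∑ M ∈ range (N + 1), a M}) ↔
    d = layerIndex h a := by
  constructor
  · intro H
    funext v
    have hv : v ∈ {w : Fin n | ∑ M ∈ range (layerIndex h a v), a M ≤ w ∧
        w < ∑ M ∈ range (layerIndex h a v + 1), a M} :=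
      (layerIndex_eq_iff (layerIndex_le h a v) (hsum ▸ v.2)).1 rfl
    rwa [← H _ (layerIndex_le h a v)] at hv
  · rintro rfl N hN
    ext v
    exact layerIndex_eq_iff hN (hsum ▸ v.2)

lemma natCard_layerIndex_eq {N : ℕ} (hsum : ∑ M ∈ range (h + 1), a M = n) (hN : N ≤ h) :
    Nat.card {v : Fin n // layerIndex h a v = N} = a N := by
  have hsucc : ∑ M ∈ range (N + 1), a M = ∑ M ∈ range N, a M + a N := sum_range_succ a N
  have hle : ∑ M ∈ range (N + 1), a M ≤ n := hsum ▸ (sum_mono_set a).comp range_mono (by omega)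
  let e : {v : Fin n // layerIndex h a v = N} ≃ Fin (a N) :=
    (Equiv.subtypeEquivRight fun v => layerIndex_eq_iff hN (hsum ▸ v.2)).trans
    { toFun v := ⟨v.1 - ∑ M ∈ range N, a M, by omega⟩
      invFun j := ⟨⟨∑ M ∈ range N, a M + j, by omega⟩, by simp only; omega⟩
      left_inv v := Subtype.ext (Fin.ext (by simp only; omega))
      right_inv j := Fin.ext (by simp) }
  rw [Nat.card_congr e, Nat.card_fin]

end LayerIndex

lemma setOf_connected_closed_layers_eq {n h : ℕ} (hn : 0 < n) {a : ℕ → ℕ} (ha0 : a 0 = 1)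
    (hsum : ∑ M ∈ range (h + 1), a M = n) :
    {G : SimpleGraph (Fin n) | G.Connected ∧ IsClosedLabeling G ∧
      ∀ N ≤ h, {v : Fin n | G.dist ⟨0, hn⟩ v = N} =
        {v : Fin n | ∑ M ∈ range N, a M ≤ v ∧ v < ∑ M ∈ range (N + 1), a M}} =
      layerGraph (layerIndex h a) '' {m | IsParentMap (layerIndex h a) m} := by
  have hℓ0 (v : Fin n) := layerIndex_eq_zero_iff ha0 hsum (v := v) hn
  ext G
  simp only [Set.mem_ofPred_eq, forall_layer_eq_iff hsum, Set.mem_image]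
  constructor
  · rintro ⟨hconn, hG, hd⟩
    have hmono : Monotone (G.dist ⟨0, hn⟩) := hd ▸ monotone_layerIndex h a
    rw [← hd]
    exact ⟨_, isParentMap_parentMap hconn hG hmono, layerGraph_parentMap hconn hG hmono⟩
  · rintro ⟨m, hm, rfl⟩
    exact ⟨hm.connected_layerGraph hℓ0, hm.isClosedLabeling_layerGraph (monotone_layerIndex h a),
      funext (hm.dist_layerGraph hℓ0)⟩

lemma natCard_isParentMap_layerIndex {n h : ℕ} {a : ℕ → ℕ} (hpos : ∀ N ≤ h, 1 ≤ a N)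
    (hsum : ∑ M ∈ range (h + 1), a M = n) :
    Nat.card {m : Fin n → Fin n // IsParentMap (layerIndex h a) m} =
      ∏ N ∈ range h, (a (N + 1) + a N - 1).choose (a N - 1) := by
  rw [Nat.card_congr (parentMapEquiv (layerIndex_le h a)), Nat.card_pi,
    ← Fin.prod_univ_eq_prod_range]
  refine prod_congr rfl fun N _ => ?_
  have hcard := natCard_layerIndex_eq hsum (N := N) N.2.le
  have : Nonempty {v // layerIndex h a v = N} := (Nat.card_pos_iff.1 (hcard ▸ hpos N N.2.le)).1
  rw [Nat.card_orderHom, hcard, natCard_layerIndex_eq hsum N.2]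

end ClosedGraph

theorem count_closed_graphs_with_layers (n h : ℕ) (hn : 0 < n) (a : ℕ → ℕ)
    (ha0 : a 0 = 1) (hpos : ∀ N ≤ h, 1 ≤ a N)
    (hsum : ∑ N ∈ Finset.range (h + 1), a N = n) :
    {G : SimpleGraph (Fin n) |
        G.Connected ∧ IsClosedLabeling G ∧
        ∀ N ≤ h, {v : Fin n | G.dist ⟨0, hn⟩ v = N} =
          {v : Fin n | ∑ M ∈ Finset.range N, a M ≤ (v : ℕ) ∧
            (v : ℕ) < ∑ M ∈ Finset.range (N + 1), a M}}.ncard =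
      ∏ N ∈ Finset.range h, Nat.choose (a (N + 1) + a N - 1) (a N - 1) := by
  rw [ClosedGraph.setOf_connected_closed_layers_eq hn ha0 hsum,
    ClosedGraph.layerGraph_injOn.ncard_image, ← Nat.card_coe_set_eq]
  exact ClosedGraph.natCard_isParentMap_layerIndex hpos hsum
end

section
/- If v is a vertex of degree d ≥ 2 in a closed graph G, then the local clustering coefficient satisfies C_v ≥ 1/2 − 1/(2(d−1)); moreover, if d ≥ 3, then C_v ≥ 1/3. -/
/-- The local clustering coefficient of a vertex: the number of (ordered) pairs
of neighbors joined by an edge divided by the number of (ordered) pairs of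
neighbors; this agrees with edges among `N(v)` divided by `C(deg v, 2)`,
and is `0` (by junk division) when `deg v ≤ 1`. -/
noncomputable def localCluster {V : Type*} (G : SimpleGraph V) (v : V) : ℚ :=
  ({p : V × V | G.Adj v p.1 ∧ G.Adj v p.2 ∧ G.Adj p.1 p.2}.ncard : ℚ) /
    (((G.neighborSet v).ncard : ℚ) * (((G.neighborSet v).ncard : ℚ) - 1))

open Finset

theorem Finset.cast_card_offDiag {α R : Type*} [DecidableEq α] [Ring R] (s : Finset α) :
    (#s.offDiag : R) = #s * (#s - 1) := by
  rw [offDiag_card, Nat.cast_sub (Nat.le_mul_self _), Nat.cast_mul, mul_sub_one]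

theorem half_sub_le_div_of_sum_mul_pred_le {K : Type*} [Field K] [LinearOrder K]
    [IsStrictOrderedRing K] {a b p : K} (hab : 1 < a + b)
    (hp : a * (a - 1) + b * (b - 1) ≤ p) :
    1 / 2 - 1 / (2 * (a + b - 1)) ≤ p / ((a + b) * (a + b - 1)) := by
  have hpos : 0 < (a + b) * (a + b - 1) := by apply mul_pos <;> linarith
  have hconv : (a + b) * (a + b - 2) ≤ 2 * p := by nlinarith [sq_nonneg (a - b)]
  have hlhs : 1 / 2 - 1 / (2 * (a + b - 1)) =
      (a + b) * (a + b - 2) / (2 * ((a + b) * (a + b - 1))) := by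
    field_simp
    ring
  rw [hlhs, div_le_div_iff₀ (by positivity) hpos]
  nlinarith

theorem sum_mul_pred_le_three_mul (a b : ℤ) (ha : 0 ≤ a) (hb : 0 ≤ b) (h : 3 ≤ a + b) :
    (a + b) * (a + b - 1) ≤ 3 * (a * (a - 1) + b * (b - 1)) := by
  -- the difference is `(a - b)² + (a - 1)² + (b - 1)² - 2`
  rcases eq_or_ne a b with rfl | hne
  · have : 2 ≤ a := by omega
    nlinarith
  · have : 1 ≤ (a - b) ^ 2 := by
      rcases hne.lt_or_gt with h | h <;> nlinarith
    rcases eq_or_ne a 1 with rfl | ha1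
    · nlinarith
    · have : 1 ≤ (a - 1) ^ 2 := by
        rcases ha1.lt_or_gt with h | h <;> nlinarith
      nlinarith [sq_nonneg (b - 1)]

theorem one_third_le_div_of_sum_mul_pred_le {a b : ℕ} {p : ℚ} (hab : 3 ≤ a + b)
    (hp : (a : ℚ) * (a - 1) + b * (b - 1) ≤ p) :
    1 / 3 ≤ p / ((a + b) * (a + b - 1)) := by
  have hint : ((a + b) * (a + b - 1) : ℚ) ≤ 3 * (a * (a - 1) + b * (b - 1)) := by
    exact_mod_cast sum_mul_pred_le_three_mul a b (by positivity) (by positivity)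
      (by exact_mod_cast hab)
  have hpos : (0 : ℚ) < (a + b) * (a + b - 1) := by
    have : (3 : ℚ) ≤ a + b := by exact_mod_cast hab
    apply mul_pos <;> linarith
  rw [le_div_iff₀ hpos]
  linarith

namespace SimpleGraph

variable {V : Type*} (G : SimpleGraph V)

theorem offDiag_subset_adjNeighborPairs {v : V} {s : Set V} (hs : G.IsClique s)
    (hsv : s ⊆ G.neighborSet v) :
    s.offDiag ⊆ {p : V × V | G.Adj v p.1 ∧ G.Adj v p.2 ∧ G.Adj p.1 p.2} :=
  fun _ ⟨h₁, h₂, hne⟩ => ⟨hsv h₁, hsv h₂, hs h₁ h₂ hne⟩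

theorem card_offDiag_add_card_offDiag_le [Finite V] [DecidableEq V] {v : V} {s t : Finset V}
    (hst : Disjoint s t) (hs : G.IsClique (s : Set V)) (ht : G.IsClique (t : Set V))
    (hsv : (s : Set V) ⊆ G.neighborSet v) (htv : (t : Set V) ⊆ G.neighborSet v) :
    #s.offDiag + #t.offDiag ≤
      {p : V × V | G.Adj v p.1 ∧ G.Adj v p.2 ∧ G.Adj p.1 p.2}.ncard := by
  have hdisj : Disjoint s.offDiag t.offDiag :=
    Finset.disjoint_left.mpr fun _ hps hpt =>
      Finset.disjoint_left.mp hst (mem_offDiag.mp hps).1 (mem_offDiag.mp hpt).1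
  rw [← card_union_of_disjoint hdisj, ← Set.ncard_coe_finset]
  refine Set.ncard_le_ncard ?_ (Set.toFinite _)
  rw [coe_union, coe_offDiag, coe_offDiag]
  exact Set.union_subset (G.offDiag_subset_adjNeighborPairs hs hsv)
    (G.offDiag_subset_adjNeighborPairs ht htv)

theorem card_neighbors_gt_add_card_neighbors_lt [LinearOrder V] (v : V)
    [Fintype (G.neighborSet v)] :
    #{u ∈ G.neighborFinset v | v < u} + #{u ∈ G.neighborFinset v | u < v} =
      (G.neighborSet v).ncard := by
  have hlt : {u ∈ G.neighborFinset v | u < v} = {u ∈ G.neighborFinset v | ¬ v < u} :=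
    filter_congr fun u hu => by
      have hne : v ≠ u := G.ne_of_adj ((G.mem_neighborFinset _ _).mp hu)
      rw [not_lt]
      exact ⟨le_of_lt, fun h => h.lt_of_ne hne.symm⟩
  rw [hlt, card_filter_add_card_filter_not, neighborFinset_def, Set.ncard_eq_toFinset_card']

end SimpleGraph

namespace IsClosedLabeling

variable {n : ℕ} {G : SimpleGraph (Fin n)}

theorem isClique_neighbors_gt (hG : IsClosedLabeling G) (v : Fin n) :
    G.IsClique {u | G.Adj v u ∧ v < u} :=
  fun _ hu _ hw hne => hG _ v _ hu.1 hw.1 hne (Or.inl ⟨hu.2, hw.2⟩)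

theorem isClique_neighbors_lt (hG : IsClosedLabeling G) (v : Fin n) :
    G.IsClique {u | G.Adj v u ∧ u < v} :=
  fun _ hu _ hw hne => hG _ v _ hu.1 hw.1 hne (Or.inr ⟨hu.2, hw.2⟩)

end IsClosedLabeling

theorem localCluster_lower_bound {n : ℕ} (G : SimpleGraph (Fin n))
    (hG : IsClosedLabeling G) (v : Fin n) (d : ℕ)
    (hd : d = (G.neighborSet v).ncard) (h2 : 2 ≤ d) :
    localCluster G v ≥ 1 / 2 - 1 / (2 * ((d : ℚ) - 1)) ∧
    (3 ≤ d → localCluster G v ≥ 1 / 3) := by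
  classical
  set above := {u ∈ G.neighborFinset v | v < u}
  set below := {u ∈ G.neighborFinset v | u < v}
  have hpairs := G.card_offDiag_add_card_offDiag_le (v := v) (s := above) (t := below)
    (disjoint_filter.mpr fun _ _ h => h.not_gt)
    (by simpa [above] using hG.isClique_neighbors_gt v)
    (by simpa [below] using hG.isClique_neighbors_lt v)
    (fun _ hu => (G.mem_neighborFinset _ _).mp (mem_filter.mp hu).1)
    (fun _ hu => (G.mem_neighborFinset _ _).mp (mem_filter.mp hu).1)
  have hpairsQ := (Nat.cast_le (α := ℚ)).mpr hpairs
  push_cast [cast_card_offDiag] at hpairsQ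
  obtain rfl : d = #above + #below :=
    hd.trans (G.card_neighbors_gt_add_card_neighbors_lt v).symm
  rw [localCluster, ← hd]
  push_cast
  have h2Q : (2 : ℚ) ≤ #above + #below := by exact_mod_cast h2
  exact ⟨half_sub_le_div_of_sum_mul_pred_le (by linarith) hpairsQ,
    fun h3 => one_third_le_div_of_sum_mul_pred_le h3 hpairsQ⟩
end
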